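/- arXiv:2409.16254 — 7 statements merged into one kernel-verified Lean document; each statement's English description precedes it below -/
import Mathlib

section
/- For every natural number n and real numbers x, y such that (y)_k ≠ 0 for all 0 ≤ k ≤ n, the terminating Gauss summation holds: ∑_{k=0}^{n} ((-n)_k (x)_k) / (k! (y)_k) = (y - x)_n / (y)_n. -/
/-- The rising factorial (Pochhammer symbol): `(x)_0 = 1`, `(x)_{n+1} = (x)_n (x+n)`. -/
def risingFactorial (x : ℝ) : ℕ → ℝ
  | 0 => 1
  | n + 1 => risingFactorial x n * (x + n)

/-- The falling factorial: `a^(0) = 1`, `a^(n+1) = a^(n) (a - n)`. -/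
def fallingFactorial (a : ℝ) : ℕ → ℝ
  | 0 => 1
  | n + 1 => fallingFactorial a n * (a - n)

lemma fallingFactorial_succ (a : ℝ) (n : ℕ) :
    fallingFactorial a (n + 1) = fallingFactorial a n * (a - n) := rfl

lemma risingFactorial_succ (x : ℝ) (n : ℕ) :
    risingFactorial x (n + 1) = risingFactorial x n * (x + n) := rfl

lemma fallingFactorial_succ_left (a : ℝ) (n : ℕ) :
    fallingFactorial a (n + 1) = a * fallingFactorial (a - 1) n := by
  induction n with
  | zero => simp [fallingFactorial]
  | succ n ih =>
    rw [fallingFactorial_succ, ih, fallingFactorial_succ]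
    push_cast
    ring

lemma rising_eq_falling (x : ℝ) (n : ℕ) :
    risingFactorial x n = fallingFactorial (x + n - 1) n := by
  induction n with
  | zero => simp [risingFactorial, fallingFactorial]
  | succ n ih =>
    rw [risingFactorial_succ, ih,
      show (x : ℝ) + (n + 1 : ℕ) - 1 = x + n by push_cast; ring,
      fallingFactorial_succ_left, show x + (n : ℝ) - 1 = x + n - 1 by ring]
    ring

lemma neg_rising (x : ℝ) (k : ℕ) :
    (-1 : ℝ) ^ k * risingFactorial x k = fallingFactorial (-x) k := by
  induction k with
  | zero => simp [risingFactorial, fallingFactorial]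
  | succ k ih =>
    rw [risingFactorial_succ, fallingFactorial_succ, ← ih]
    ring

lemma rising_add (y : ℝ) (k m : ℕ) :
    risingFactorial y (k + m) = risingFactorial y k * risingFactorial (y + k) m := by
  induction m with
  | zero => simp [risingFactorial]
  | succ m ih =>
    rw [show k + (m + 1) = (k + m) + 1 from rfl, risingFactorial_succ, ih,
      risingFactorial_succ]
    push_cast
    ring

lemma rising_neg_nat (n k : ℕ) (hk : k ≤ n) :
    risingFactorial (-(n : ℝ)) k = (-1) ^ k * (n.descFactorial k : ℝ) := by
  induction k with
  | zero => simp [risingFactorial]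
  | succ k ih =>
    have hk' : k ≤ n := Nat.le_of_succ_le hk
    rw [risingFactorial_succ, ih hk', Nat.descFactorial_succ]
    have : ((n - k : ℕ) : ℝ) = (n : ℝ) - k := by
      have := Nat.cast_sub hk' (R := ℝ); linarith
    push_cast [Nat.cast_sub hk']
    ring

/-- Vandermonde's identity for falling factorials. -/
lemma falling_vandermonde (a b : ℝ) (n : ℕ) :
    fallingFactorial (a + b) n
      = ∑ k ∈ Finset.range (n + 1),
          (n.choose k : ℝ) * fallingFactorial a k * fallingFactorial b (n - k) := by
  induction n with
  | zero => simp [fallingFactorial]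
  | succ n ih =>
    rw [fallingFactorial_succ, ih, Finset.sum_mul]
    have hsplit : ∀ k ∈ Finset.range (n + 1),
        (n.choose k : ℝ) * fallingFactorial a k * fallingFactorial b (n - k) * (a + b - n)
          = (n.choose k : ℝ) * fallingFactorial a (k + 1) * fallingFactorial b (n - k)
            + (n.choose k : ℝ) * fallingFactorial a k * fallingFactorial b (n - k + 1) := by
      intro k hk
      have hk' : k ≤ n := Nat.lt_succ_iff.mp (Finset.mem_range.mp hk)
      have hc : ((n - k : ℕ) : ℝ) = (n : ℝ) - k := by push_cast [Nat.cast_sub hk']; ring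
      rw [fallingFactorial_succ, fallingFactorial_succ, hc]
      ring
    rw [Finset.sum_congr rfl hsplit, Finset.sum_add_distrib]
    -- now identify each piece
    have hS2 : ∑ k ∈ Finset.range (n + 1),
        (n.choose k : ℝ) * fallingFactorial a k * fallingFactorial b (n - k + 1)
        = fallingFactorial b (n + 1)
          + ∑ i ∈ Finset.range n,
              (n.choose (i + 1) : ℝ) * fallingFactorial a (i + 1)
                * fallingFactorial b (n - i) := by
      rw [Finset.sum_range_succ' (fun k => (n.choose k : ℝ) * fallingFactorial a k *
        fallingFactorial b (n - k + 1))]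
      simp only [Nat.choose_zero_right, Nat.cast_one, Nat.sub_zero]
      have : ∀ i ∈ Finset.range n,
          (n.choose (i + 1) : ℝ) * fallingFactorial a (i + 1)
              * fallingFactorial b (n - (i + 1) + 1)
            = (n.choose (i + 1) : ℝ) * fallingFactorial a (i + 1)
              * fallingFactorial b (n - i) := by
        intro i hi
        have : n - (i + 1) + 1 = n - i := by
          have := Finset.mem_range.mp hi; omega
        rw [this]
      rw [Finset.sum_congr rfl this]
      simp [fallingFactorial]
      ring
    rw [hS2]
    -- RHS
    rw [Finset.sum_range_succ' (fun k => ((n + 1).choose k : ℝ) * fallingFactorial a k *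
      fallingFactorial b (n + 1 - k))]
    have hterm : ∀ i ∈ Finset.range (n + 1),
        (((n + 1).choose (i + 1) : ℕ) : ℝ) * fallingFactorial a (i + 1)
            * fallingFactorial b (n + 1 - (i + 1))
          = (n.choose i : ℝ) * fallingFactorial a (i + 1) * fallingFactorial b (n - i)
            + (n.choose (i + 1) : ℝ) * fallingFactorial a (i + 1)
              * fallingFactorial b (n - i) := by
      intro i hi
      rw [Nat.choose_succ_succ, show n + 1 - (i + 1) = n - i by omega]
      push_cast
      ring
    rw [Finset.sum_congr rfl hterm, Finset.sum_add_distrib]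
    have hlast : ∑ i ∈ Finset.range (n + 1),
        (n.choose (i + 1) : ℝ) * fallingFactorial a (i + 1) * fallingFactorial b (n - i)
        = ∑ i ∈ Finset.range n,
            (n.choose (i + 1) : ℝ) * fallingFactorial a (i + 1) * fallingFactorial b (n - i) := by
      rw [Finset.sum_range_succ]
      simp [Nat.choose_succ_self]
    rw [hlast]
    simp [fallingFactorial]
    ring

/-- Terminating Gauss summation (Chu–Vandermonde in hypergeometric form). -/
theorem terminating_gauss (n : ℕ) (x y : ℝ)
    (hy : ∀ k ≤ n, risingFactorial y k ≠ 0) :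
    ∑ k ∈ Finset.range (n + 1),
        risingFactorial (-(n : ℝ)) k * risingFactorial x k /
          ((k.factorial : ℝ) * risingFactorial y k)
      = risingFactorial (y - x) n / risingFactorial y n := by
  have hyn : risingFactorial y n ≠ 0 := hy n le_rfl
  have hterm : ∀ k ∈ Finset.range (n + 1),
      risingFactorial (-(n : ℝ)) k * risingFactorial x k /
          ((k.factorial : ℝ) * risingFactorial y k)
        = (n.choose k : ℝ) * fallingFactorial (-x) k
            * fallingFactorial (y + n - 1) (n - k) / risingFactorial y n := by
    intro k hk
    have hk' : k ≤ n := Nat.lt_succ_iff.mp (Finset.mem_range.mp hk)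
    have hyk : risingFactorial y k ≠ 0 := hy k hk'
    have hfk : (k.factorial : ℝ) ≠ 0 := Nat.cast_ne_zero.mpr k.factorial_ne_zero
    have hsplit : risingFactorial y n
        = risingFactorial y k * risingFactorial (y + k) (n - k) := by
      rw [← rising_add, Nat.add_sub_cancel' hk']
    have hfall : risingFactorial (y + k) (n - k) = fallingFactorial (y + n - 1) (n - k) := by
      rw [rising_eq_falling]
      congr 1
      push_cast [Nat.cast_sub hk']
      ring
    rw [rising_neg_nat n k hk', Nat.descFactorial_eq_factorial_mul_choose,
      hsplit, hfall]
    have hnr : (-1 : ℝ) ^ k * risingFactorial x k = fallingFactorial (-x) k := neg_rising x k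
    have hffb : fallingFactorial (y + n - 1) (n - k) ≠ 0 := by
      rw [hsplit, hfall] at hyn
      exact fun h => hyn (by rw [h, mul_zero])
    rw [div_eq_div_iff (mul_ne_zero hfk hyk) (mul_ne_zero hyk hffb)]
    push_cast
    linear_combination ((k.factorial : ℝ) * (n.choose k : ℝ) * risingFactorial y k *
      fallingFactorial (y + (n : ℝ) - 1) (n - k)) * hnr
  rw [Finset.sum_congr rfl hterm, ← Finset.sum_div]
  congr 1
  rw [← falling_vandermonde, rising_eq_falling]
  congr 1
  ring
end

section
/- Let x > 0 and y, z, a, b, c be real numbers. Then as β → ∞, (xβ + y√β + z)^{aβ + b√β + c} ~ (xβ)^{aβ + b√β + c} · exp((ay/x)√β + az/x − ay²/(2x²) + by/x); that is, the ratio of the two sides tends to 1. -/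
open Filter Real Set Topology

private lemma sqrt_tendsto_atTop : Tendsto Real.sqrt atTop atTop := by
  rw [tendsto_atTop_atTop]
  intro M
  refine ⟨M ^ 2, fun β hβ => ?_⟩
  calc M ≤ |M| := le_abs_self M
  _ = Real.sqrt (M ^ 2) := (Real.sqrt_sq_eq_abs M).symm
  _ ≤ Real.sqrt β := Real.sqrt_le_sqrt hβ

private lemma base_pos (p q : ℝ) : ∀ᶠ t in 𝓝[>] (0 : ℝ), 0 < 1 + p * t + q * t ^ 2 := by
  have hc : ContinuousAt (fun t : ℝ => 1 + p * t + q * t ^ 2) 0 := by fun_prop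
  have h := hc.eventually
    (eventually_gt_nhds (show (0:ℝ) < 1 + p * 0 + q * 0 ^ 2 by norm_num))
  exact h.filter_mono nhdsWithin_le_nhds

private lemma log_slope_lim (p q : ℝ) :
    Tendsto (fun t => Real.log (1 + p * t + q * t ^ 2) / t) (𝓝[>] (0:ℝ)) (𝓝 p) := by
  have hd : HasDerivAt (fun t : ℝ => Real.log (1 + p * t + q * t ^ 2)) p 0 := by
    have hu : HasDerivAt (fun t : ℝ => 1 + p * t + q * t ^ 2) p 0 := by
      have h1 : HasDerivAt (fun t : ℝ => 1 + p * t + q * t ^ 2)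
          (0 + p * 1 + q * (↑2 * 0 ^ 1)) 0 :=
        ((hasDerivAt_const 0 (1:ℝ)).add ((hasDerivAt_id 0).const_mul p)).add
          ((hasDerivAt_pow 2 0).const_mul q)
      simpa using h1
    have hne : (1 : ℝ) + p * 0 + q * 0 ^ 2 ≠ 0 := by norm_num
    have h2 := hu.log hne
    simpa using h2
  have h3 := hasDerivAt_iff_tendsto_slope.mp hd
  have h2 : Tendsto (slope (fun t : ℝ => Real.log (1 + p * t + q * t ^ 2)) 0) (𝓝[>] 0) (𝓝 p) :=
    h3.mono_left (nhdsWithin_mono 0 (fun t ht => Set.mem_compl_singleton_iff.mpr (ne_of_gt ht)))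
  refine h2.congr' ?_
  filter_upwards [self_mem_nhdsWithin] with t ht
  rw [slope_def_field]
  norm_num

private lemma log_second_order (p q : ℝ) :
    Tendsto (fun t => (Real.log (1 + p * t + q * t ^ 2) - p * t) / t ^ 2) (𝓝[>] (0:ℝ))
      (𝓝 (q - p ^ 2 / 2)) := by
  apply HasDerivAt.lhopital_zero_nhdsGT
    (f' := fun t => (p + 2 * q * t) / (1 + p * t + q * t ^ 2) - p) (g' := fun t => 2 * t)
  · filter_upwards [base_pos p q] with t ht
    have hu : HasDerivAt (fun t : ℝ => 1 + p * t + q * t ^ 2) (p + 2 * q * t) t := by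
      have h1 : HasDerivAt (fun t : ℝ => 1 + p * t + q * t ^ 2)
          (0 + p * 1 + q * (↑2 * t ^ 1)) t :=
        ((hasDerivAt_const t (1:ℝ)).add ((hasDerivAt_id t).const_mul p)).add
          ((hasDerivAt_pow 2 t).const_mul q)
      convert h1 using 1
      ring
    have h2 := (hu.log (ne_of_gt ht)).sub ((hasDerivAt_id t).const_mul p)
    simpa [Pi.sub_def] using h2
  · filter_upwards with t
    have h := hasDerivAt_pow 2 t
    simpa using h
  · filter_upwards [self_mem_nhdsWithin] with t ht
    have h : (0:ℝ) < t := ht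
    positivity
  · have hc : ContinuousAt (fun t : ℝ => Real.log (1 + p * t + q * t ^ 2) - p * t) 0 := by
      apply ContinuousAt.sub
      · apply ContinuousAt.log (by fun_prop)
        norm_num
      · fun_prop
    have h : Tendsto _ (𝓝[>] (0:ℝ)) _ := hc.tendsto.mono_left nhdsWithin_le_nhds
    simpa using h
  · have hc : ContinuousAt (fun t : ℝ => t ^ 2) (0:ℝ) := by fun_prop
    have h : Tendsto _ (𝓝[>] (0:ℝ)) _ := hc.tendsto.mono_left nhdsWithin_le_nhds
    simpa using h
  · have hc : Tendsto (fun t : ℝ => ((2 * q - p ^ 2) - p * q * t) / (2 * (1 + p * t + q * t ^ 2)))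
        (𝓝[>] 0) (𝓝 (q - p ^ 2 / 2)) := by
      have hcc : ContinuousAt
          (fun t : ℝ => ((2 * q - p ^ 2) - p * q * t) / (2 * (1 + p * t + q * t ^ 2))) 0 := by
        apply ContinuousAt.div (by fun_prop) (by fun_prop)
        norm_num
      have h : Tendsto _ (𝓝[>] (0:ℝ)) _ := hcc.tendsto.mono_left nhdsWithin_le_nhds
      convert h using 2
      norm_num
      ring
    refine hc.congr' ?_
    filter_upwards [base_pos p q, self_mem_nhdsWithin] with t hb ht
    have ht' : (0:ℝ) < t := ht
    field_simp
    ring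

private lemma H_lim (p q a b c C : ℝ) (hC : C = a * (q - p ^ 2 / 2) + b * p) :
    Tendsto (fun t => (a / t ^ 2 + b / t + c) * Real.log (1 + p * t + q * t ^ 2)
      - (a * p / t + C)) (𝓝[>] (0:ℝ)) (𝓝 0) := by
  have hg : Tendsto (fun t => Real.log (1 + p * t + q * t ^ 2)) (𝓝[>] (0:ℝ)) (𝓝 0) := by
    have hc : ContinuousAt (fun t : ℝ => Real.log (1 + p * t + q * t ^ 2)) 0 := by
      apply ContinuousAt.log (by fun_prop); norm_num
    have h : Tendsto _ (𝓝[>] (0:ℝ)) _ := hc.tendsto.mono_left nhdsWithin_le_nhds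
    simpa using h
  have key : Tendsto (fun t => a * ((Real.log (1 + p * t + q * t ^ 2) - p * t) / t ^ 2)
      + b * (Real.log (1 + p * t + q * t ^ 2) / t) + c * Real.log (1 + p * t + q * t ^ 2) - C)
      (𝓝[>] (0:ℝ)) (𝓝 (a * (q - p ^ 2 / 2) + b * p + c * 0 - C)) :=
    ((((log_second_order p q).const_mul a).add ((log_slope_lim p q).const_mul b)).add
      (hg.const_mul c)).sub tendsto_const_nhds
  rw [hC] at key
  rw [show a * (q - p ^ 2 / 2) + b * p + c * 0 - (a * (q - p ^ 2 / 2) + b * p) = 0 by ring] at key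
  refine key.congr' ?_
  filter_upwards [self_mem_nhdsWithin] with t ht
  have ht' : (0:ℝ) < t := ht
  have ht0 : t ≠ 0 := ht'.ne'
  rw [hC]
  field_simp
  ring

/-- Asymptotics of `(xβ + y√β + z)^(aβ + b√β + c)` as `β → ∞`. -/
theorem power_asymptotic (x y z a b c : ℝ) (hx : 0 < x) :
    Tendsto (fun β : ℝ =>
        (x * β + y * Real.sqrt β + z) ^ (a * β + b * Real.sqrt β + c) /
          ((x * β) ^ (a * β + b * Real.sqrt β + c) *
            Real.exp (a * y / x * Real.sqrt β + a * z / x - a * y ^ 2 / (2 * x ^ 2) + b * y / x)))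
      atTop (nhds 1) := by
  have hx' : x ≠ 0 := hx.ne'
  set p := y / x with hp
  set q := z / x with hq
  set C : ℝ := a * (q - p ^ 2 / 2) + b * p with hCdef
  set H : ℝ → ℝ := fun t => (a / t ^ 2 + b / t + c) * Real.log (1 + p * t + q * t ^ 2)
      - (a * p / t + C) with hH
  have hHlim : Tendsto H (𝓝[>] (0:ℝ)) (𝓝 0) := H_lim p q a b c C rfl
  have hinv : Tendsto (fun β : ℝ => (Real.sqrt β)⁻¹) atTop (𝓝[>] (0:ℝ)) := by
    rw [tendsto_nhdsWithin_iff]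
    constructor
    · exact sqrt_tendsto_atTop.inv_tendsto_atTop
    · filter_upwards [eventually_gt_atTop (0:ℝ)] with β hβ
      exact inv_pos.mpr (Real.sqrt_pos.mpr hβ)
  have hF : Tendsto (fun β : ℝ => H ((Real.sqrt β)⁻¹)) atTop (𝓝 0) := hHlim.comp hinv
  have hexp : Tendsto (fun β : ℝ => Real.exp (H ((Real.sqrt β)⁻¹))) atTop (𝓝 1) := by
    have h := (Real.continuous_exp.continuousAt (x := 0)).tendsto.comp hF
    simpa [Function.comp_def] using h
  refine hexp.congr' ?_
  -- eventual positivity of the base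
  have hbase : ∀ᶠ β : ℝ in atTop, 0 < x * β + y * Real.sqrt β + z := by
    have h1 : Tendsto (fun β : ℝ => x / 2 * β + -|z|) atTop atTop :=
      tendsto_atTop_add_const_right atTop (-|z|) (tendsto_id.const_mul_atTop (half_pos hx))
    have h2 : ∀ᶠ β : ℝ in atTop, x / 2 * β + -|z| ≤ x * β + y * Real.sqrt β + z := by
      filter_upwards [(sqrt_tendsto_atTop.const_mul_atTop hx).eventually_ge_atTop (2 * |y|),
        eventually_ge_atTop (0:ℝ)] with β h1' h0
      have hs : (0:ℝ) ≤ Real.sqrt β := Real.sqrt_nonneg β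
      have hss : Real.sqrt β * Real.sqrt β = β := Real.mul_self_sqrt h0
      have hA : 2 * |y| * Real.sqrt β ≤ x * Real.sqrt β * Real.sqrt β :=
        mul_le_mul_of_nonneg_right h1' hs
      rw [mul_assoc x, hss] at hA
      have hB : -|y| * Real.sqrt β ≤ y * Real.sqrt β :=
        mul_le_mul_of_nonneg_right (neg_abs_le y) hs
      have hC : -|z| ≤ z := neg_abs_le z
      linarith
    exact (tendsto_atTop_mono' atTop h2 h1).eventually_gt_atTop 0
  filter_upwards [hbase, eventually_gt_atTop (0:ℝ)] with β hB hβ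
  have hspos : 0 < Real.sqrt β := Real.sqrt_pos.mpr hβ
  set s : ℝ := Real.sqrt β with hsdef
  have hs' : s ≠ 0 := hspos.ne'
  have hsq : s ^ 2 = β := Real.sq_sqrt hβ.le
  have hxb : 0 < x * β := by positivity
  set t : ℝ := s⁻¹ with htdef
  have hbr : 1 + p * t + q * t ^ 2 = (x * β + y * s + z) / (x * β) := by
    rw [← hsq, hp, hq, htdef]
    field_simp
  have hE : a / t ^ 2 + b / t + c = a * β + b * s + c := by
    rw [← hsq, htdef]
    field_simp
  have hL : a * p / t + C = a * y / x * s + a * z / x - a * y ^ 2 / (2 * x ^ 2) + b * y / x := by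
    rw [htdef, hCdef, hp, hq]
    field_simp
    ring
  have hlog : Real.log (1 + p * t + q * t ^ 2)
      = Real.log (x * β + y * s + z) - Real.log (x * β) := by
    rw [hbr, Real.log_div hB.ne' hxb.ne']
  show Real.exp (H t) = _
  rw [hH]
  simp only
  rw [hlog, hE, hL]
  rw [Real.rpow_def_of_pos hB, Real.rpow_def_of_pos hxb, ← Real.exp_add, ← Real.exp_sub]
  congr 1
  ring
end

section
/- Let x > 0 and y, z be real numbers. Then as β → ∞, Γ(xβ + y√β + z) ~ √(2π) · (xβ)^{xβ + y√β + z − 1/2} · exp(y²/(2x) − xβ); i.e., the ratio of the two sides tends to 1. -/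
open Filter Real


lemma log_taylor_bound {w : ℝ} (hw : |w| ≤ 1/2) :
    |Real.log (1 + w) - w + w ^ 2 / 2| ≤ 2 * |w| ^ 3 := by
  have h1 : |(-w)| < 1 := by rw [abs_neg]; linarith
  have h3 : |(-w)| ^ 3 / (1 - |(-w)|) ≤ 2 * |w| ^ 3 := by
    rw [abs_neg]
    rw [div_le_iff₀ (by linarith [abs_nonneg w])]
    nlinarith [pow_nonneg (abs_nonneg w) 3]
  calc |Real.log (1 + w) - w + w ^ 2 / 2|
      = |(-w + (-w)^2/2) + Real.log (1 - (-w))| := by ring_nf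
    _ ≤ |(-w)| ^ (2+1) / (1 - |(-w)|) := by
        have := Real.abs_log_sub_add_sum_range_le h1 2
        convert this using 2
        simp [Finset.sum_range_succ]
        ring
    _ ≤ 2 * |w| ^ 3 := h3

lemma correction_tendsto (x y z : ℝ) (hx : 0 < x) :
    Tendsto (fun s : ℝ =>
      (x * s^2 + y * s + z - 1/2) * Real.log (1 + (y * s + z) / (x * s^2))
        - y * s - z - y^2 / (2*x)) atTop (nhds 0) := by
  set t : ℝ → ℝ := fun s => x * s^2 + y * s + z with ht
  set u : ℝ → ℝ := fun s => (y * s + z) / (x * s^2) with hu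
  have hinv : Tendsto (fun s : ℝ => s⁻¹) atTop (nhds 0) := tendsto_inv_atTop_zero
  have hpos := eventually_gt_atTop (0:ℝ)
  have h1 : Tendsto (fun s => (y * s + z) / s) atTop (nhds y) := by
    have h : Tendsto (fun s : ℝ => y + z * s⁻¹) atTop (nhds (y + z * 0)) :=
      tendsto_const_nhds.add (hinv.const_mul z)
    simp only [mul_zero, add_zero] at h
    apply h.congr'
    filter_upwards [hpos] with s hs
    field_simp
  have h2 : Tendsto (fun s => (t s - 1/2) / s^2) atTop (nhds x) := by
    have h : Tendsto (fun s : ℝ => x + y * s⁻¹ + (z - 1/2) * (s⁻¹ * s⁻¹)) atTop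
        (nhds (x + y * 0 + (z - 1/2) * (0 * 0))) :=
      (tendsto_const_nhds.add (hinv.const_mul y)).add ((hinv.mul hinv).const_mul _)
    simp only [mul_zero, add_zero, zero_mul] at h
    apply h.congr'
    filter_upwards [hpos] with s hs
    rw [ht]
    field_simp
    ring
  have h3 : Tendsto (fun s : ℝ => (x * s)⁻¹) atTop (nhds 0) :=
    (tendsto_id.const_mul_atTop hx).inv_tendsto_atTop
  have hu0 : Tendsto u atTop (nhds 0) := by
    have h := h1.mul h3
    rw [mul_zero] at h
    apply h.congr'
    filter_upwards [hpos] with s hs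
    rw [hu, ← div_eq_mul_inv, div_div]
    congr 1
    ring
  -- A part
  have hA : Tendsto (fun s => (t s - 1/2) * u s - y * s - z - y^2 / x) atTop (nhds 0) := by
    have h : Tendsto (fun s : ℝ => (y * (2*z - 1/2) / x) * s⁻¹ + (z * (z - 1/2) / x) * (s⁻¹ * s⁻¹))
        atTop (nhds ((y * (2*z - 1/2) / x) * 0 + (z * (z - 1/2) / x) * (0 * 0))) :=
      (hinv.const_mul _).add ((hinv.mul hinv).const_mul _)
    simp only [mul_zero, add_zero, zero_mul] at h
    apply h.congr'
    filter_upwards [hpos] with s hs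
    rw [ht, hu]
    field_simp
    ring
  -- B part
  have hB : Tendsto (fun s => y^2 / (2*x) - (t s - 1/2) * (u s)^2 / 2) atTop (nhds 0) := by
    have h : Tendsto (fun s => y^2/(2*x) - ((t s - 1/2)/s^2) * ((y * s + z)/s)^2 / (2*x^2))
        atTop (nhds (y^2/(2*x) - x * y^2 / (2*x^2))) := by
      have := (h2.mul (h1.pow 2)).div_const (2*x^2)
      exact tendsto_const_nhds.sub (by simpa using this)
    have hval : y^2/(2*x) - x * y^2 / (2*x^2) = 0 := by field_simp; ring
    rw [hval] at h
    apply h.congr'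
    filter_upwards [hpos] with s hs
    rw [ht, hu]
    field_simp
  -- C part : squeeze
  have hC : Tendsto (fun s => (t s - 1/2) * (Real.log (1 + u s) - u s + (u s)^2 / 2))
      atTop (nhds 0) := by
    refine squeeze_zero_norm'
      (a := fun s => 2 * ((t s - 1/2)/s^2) * |(y * s + z) / s|^3 * (x^3 * s)⁻¹) ?_ ?_
    · have husmall : ∀ᶠ s in atTop, |u s| ≤ 1/2 := by
        have := hu0.eventually (eventually_abs_sub_lt 0 (by norm_num : (0:ℝ) < 1/2))
        filter_upwards [this] with s hs
        simpa using hs.le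
      have hT : Tendsto t atTop atTop := by
        have h := tendsto_atTop_add_const_right atTop z
          (Tendsto.atTop_mul_atTop₀ tendsto_id
            (tendsto_atTop_add_const_right atTop y (tendsto_id.const_mul_atTop hx)))
        apply h.congr
        intro s
        simp only [ht, id_eq]
        ring
      have htpos : ∀ᶠ s in atTop, 1/2 ≤ t s := hT.eventually_ge_atTop _
      filter_upwards [husmall, htpos, hpos] with s hsmall htp hsp
      have hb := log_taylor_bound hsmall
      have habs : |u s| = |y * s + z| / (x * s^2) := by
        rw [hu]
        rw [abs_div, abs_of_pos (by positivity : (0:ℝ) < x * s^2)]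
      calc ‖(t s - 1/2) * (Real.log (1 + u s) - u s + (u s)^2 / 2)‖
          = |t s - 1/2| * |Real.log (1 + u s) - u s + (u s)^2 / 2| := abs_mul _ _
        _ ≤ (t s - 1/2) * (2 * |u s|^3) := by
            rw [abs_of_nonneg (by linarith : (0:ℝ) ≤ t s - 1/2)]
            exact mul_le_mul_of_nonneg_left hb (by linarith)
        _ = 2 * ((t s - 1/2)/s^2) * |(y * s + z) / s|^3 * (x^3 * s)⁻¹ := by
            rw [habs, abs_div, abs_of_pos hsp]
            field_simp
    · have h := ((h2.const_mul 2).mul ((h1.abs).pow 3)).mul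
        ((tendsto_id.const_mul_atTop (by positivity : (0:ℝ) < x^3)).inv_tendsto_atTop)
      rw [mul_zero] at h
      exact h
  have := (hA.add hB).add hC
  rw [add_zero, add_zero] at this
  apply this.congr
  intro s
  rw [ht, hu]
  ring


-- E_tendsto
lemma stirling_log_tendsto :
    Tendsto (fun n : ℕ => Real.log n.factorial -
      ((n + 1/2) * Real.log n - n + Real.log (Real.sqrt (2*π)))) atTop (nhds 0) := by
  have hne : ∀ᶠ n : ℕ in atTop,
      (Real.sqrt (2*n*π) * ((n : ℝ) / Real.exp 1)^n : ℝ) ≠ 0 := by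
    filter_upwards [eventually_gt_atTop 0] with n hn
    have : (0:ℝ) < n := by exact_mod_cast hn
    positivity
  have h1 : Tendsto (fun n : ℕ =>
      (n.factorial : ℝ) / (Real.sqrt (2*n*π) * ((n:ℝ) / Real.exp 1)^n)) atTop (nhds 1) := by
    have := (Asymptotics.isEquivalent_iff_tendsto_one hne).mp
      Stirling.factorial_isEquivalent_stirling
    exact this
  have h2 := h1.log one_ne_zero
  rw [Real.log_one] at h2
  apply h2.congr'
  filter_upwards [eventually_gt_atTop 0] with n hn
  have hn0 : (0:ℝ) < n := by exact_mod_cast hn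
  have hfac : (0:ℝ) < n.factorial := by exact_mod_cast n.factorial_pos
  have hden : (0:ℝ) < Real.sqrt (2*n*π) * ((n:ℝ) / Real.exp 1)^n := by positivity
  rw [Real.log_div (ne_of_gt hfac) (ne_of_gt hden),
    Real.log_mul (by positivity) (by positivity),
    Real.log_pow, Real.log_div (ne_of_gt hn0) (Real.exp_ne_zero 1), Real.log_exp,
    Real.log_sqrt (by positivity), Real.log_sqrt (by positivity),
    show (2*(n:ℝ)*π) = (2*π)*(n:ℝ) by ring,
    Real.log_mul (by positivity) (ne_of_gt hn0)]
  ring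

lemma conv_upper {t : ℝ} {n : ℕ} (hn : 1 ≤ n) (h1 : (n:ℝ) ≤ t) (h2 : t ≤ (n:ℝ)+1) :
    Real.log (Real.Gamma t) ≤ Real.log (Real.Gamma n) + (t - n) * Real.log n := by
  have hn0 : (0:ℝ) < n := by exact_mod_cast hn
  have key := convexOn_log_Gamma.2 (Set.mem_Ioi.mpr hn0)
    (Set.mem_Ioi.mpr (by linarith : (0:ℝ) < (n:ℝ)+1))
    (by linarith : (0:ℝ) ≤ (n:ℝ)+1-t) (by linarith : (0:ℝ) ≤ t - n) (by ring)
  simp only [smul_eq_mul, Function.comp_apply] at key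
  have harg : ((n:ℝ)+1 - t)*n + (t - n)*((n:ℝ)+1) = t := by ring
  rw [harg] at key
  have hΓ : Real.Gamma ((n:ℝ)+1) = n * Real.Gamma n := Real.Gamma_add_one (ne_of_gt hn0)
  rw [hΓ, Real.log_mul (ne_of_gt hn0) (ne_of_gt (Real.Gamma_pos_of_pos hn0))] at key
  nlinarith [key]

lemma conv_lower {t : ℝ} {n : ℕ} (hn : 1 ≤ n) (h1 : (n:ℝ) ≤ t) (h2 : t ≤ (n:ℝ)+1) :
    Real.log (Real.Gamma ((n:ℝ)+1)) ≤ Real.log (Real.Gamma t) + ((n:ℝ)+1-t) * Real.log t := by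
  have hn0 : (0:ℝ) < n := by exact_mod_cast hn
  have ht0 : 0 < t := lt_of_lt_of_le hn0 h1
  have key := convexOn_log_Gamma.2 (Set.mem_Ioi.mpr ht0)
    (Set.mem_Ioi.mpr (by linarith : (0:ℝ) < t+1))
    (by linarith : (0:ℝ) ≤ t - n) (by linarith : (0:ℝ) ≤ (n:ℝ)+1-t) (by ring)
  simp only [smul_eq_mul, Function.comp_apply] at key
  have harg : (t - n)*t + ((n:ℝ)+1-t)*(t+1) = (n:ℝ)+1 := by ring
  rw [harg] at key
  have hΓ : Real.Gamma (t+1) = t * Real.Gamma t := Real.Gamma_add_one (ne_of_gt ht0)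
  rw [hΓ, Real.log_mul (ne_of_gt ht0) (ne_of_gt (Real.Gamma_pos_of_pos ht0))] at key
  nlinarith [key]

lemma log_gamma_sub_tendsto :
    Tendsto (fun t : ℝ => Real.log (Real.Gamma t) -
      ((t - 1/2) * Real.log t - t + Real.log (Real.sqrt (2*π)))) atTop (nhds 0) := by
  set c := Real.log (Real.sqrt (2*π)) with hc
  set E : ℕ → ℝ := fun n => Real.log n.factorial - ((n + 1/2) * Real.log n - n + c) with hE
  have hfloor : Tendsto (fun t : ℝ => (⌊t⌋₊ : ℕ)) atTop atTop := tendsto_nat_floor_atTop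
  have hEf : Tendsto (fun t : ℝ => E ⌊t⌋₊) atTop (nhds 0) :=
    stirling_log_tendsto.comp hfloor
  have h2n : Tendsto (fun t : ℝ => 2/(⌊t⌋₊:ℝ)) atTop (nhds 0) :=
    (tendsto_const_div_atTop_nhds_zero_nat 2).comp hfloor
  refine tendsto_of_tendsto_of_tendsto_of_le_of_le'
    (g := fun t => E ⌊t⌋₊ - 2/(⌊t⌋₊:ℝ)) (h := fun t => E ⌊t⌋₊ + 2/(⌊t⌋₊:ℝ))
    (by simpa using hEf.sub h2n) (by simpa using hEf.add h2n) ?_ ?_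
  all_goals {
    filter_upwards [eventually_ge_atTop (2:ℝ)] with t ht2
    set n := ⌊t⌋₊ with hn
    have hn2 : 2 ≤ n := Nat.le_floor (by exact_mod_cast ht2)
    have hn1 : 1 ≤ n := le_trans (by norm_num) hn2
    have hnt : (n:ℝ) ≤ t := Nat.floor_le (by linarith)
    have htn1 : t < (n:ℝ)+1 := Nat.lt_floor_add_one t
    have hn0 : (0:ℝ) < n := by exact_mod_cast hn1
    have ht0 : (0:ℝ) < t := by linarith
    have hΓn : Real.log (Real.Gamma n) = Real.log n.factorial - Real.log n := by
      have h := Real.Gamma_add_one (ne_of_gt hn0)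
      have h2 : Real.Gamma ((n:ℝ)+1) = n.factorial := by
        exact_mod_cast Real.Gamma_nat_eq_factorial n
      rw [h2] at h
      have : Real.Gamma (n:ℝ) = n.factorial / n := by
        field_simp at h ⊢; linarith [h]
      rw [this, Real.log_div (by exact_mod_cast n.factorial_pos.ne') (ne_of_gt hn0)]
    have hΓn1 : Real.log (Real.Gamma ((n:ℝ)+1)) = Real.log n.factorial := by
      have h2 : Real.Gamma ((n:ℝ)+1) = n.factorial := by
        exact_mod_cast Real.Gamma_nat_eq_factorial n
      rw [h2]
    -- log bounds
    have hLub : Real.log t - Real.log n ≤ (t - n)/n := by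
      have := Real.log_le_sub_one_of_pos (x := t/(n:ℝ)) (by positivity)
      rw [Real.log_div (ne_of_gt ht0) (ne_of_gt hn0)] at this
      have heq : t/(n:ℝ) - 1 = (t - n)/n := by field_simp
      linarith [heq ▸ this]
    have hLlb : t - (n:ℝ) ≤ t * (Real.log t - Real.log n) := by
      have := Real.log_le_sub_one_of_pos (x := (n:ℝ)/t) (by positivity)
      rw [Real.log_div (ne_of_gt hn0) (ne_of_gt ht0)] at this
      have h3 : 1 - (n:ℝ)/t ≤ Real.log t - Real.log n := by linarith
      have h4 := mul_le_mul_of_nonneg_left h3 (le_of_lt ht0)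
      have h5 : t * (1 - (n:ℝ)/t) = t - n := by field_simp
      linarith [h5 ▸ h4]
    have hL0 : 0 ≤ Real.log t - Real.log n := by nlinarith
    have h8 : Real.log t - Real.log n ≤ 2/n := by
      have h7 : (t - n)/(n:ℝ) ≤ 2/n := by
        gcongr <;> linarith
      linarith
    have h6 : (t - 1/2) * (Real.log t - Real.log n) ≥ (t - n) - (Real.log t - Real.log n)/2 := by
      nlinarith [hLlb]
    have hLub' : (n:ℝ) * (Real.log t - Real.log n) ≤ t - n := by
      have := (le_div_iff₀ hn0).mp hLub
      linarith [this, mul_comm ((n:ℝ)) (Real.log t - Real.log n)]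
    first
    | -- lower bound goal : E n - 2/n ≤ D t
      (have hcv := conv_lower hn1 hnt (le_of_lt htn1)
       rw [hΓn1] at hcv
       have hkey : ((n:ℝ)+1/2) * (Real.log t - Real.log n) ≤ (t - n) + 2/n := by
         nlinarith [hLub', h8]
       simp only [hE]
       linarith [hcv, hkey])
    | -- upper bound goal
      (have hcv := conv_upper hn1 hnt (le_of_lt htn1)
       rw [hΓn] at hcv
       have hkey : (t - n) - (t - 1/2) * (Real.log t - Real.log n) ≤ 2/n := by
         linarith [h6, h8]
       simp only [hE]
       linarith [hcv, hkey]) }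

lemma gamma_stirling_real :
    Tendsto (fun t : ℝ => Real.Gamma t /
      (Real.sqrt (2 * Real.pi) * t ^ (t - 1/2) * Real.exp (-t))) atTop (nhds 1) := by
  have h := (Real.continuous_exp.tendsto 0).comp log_gamma_sub_tendsto
  rw [Real.exp_zero] at h
  rw [show ((fun x => Real.exp x) ∘ fun t : ℝ => Real.log (Real.Gamma t) -
      ((t - 1/2) * Real.log t - t + Real.log (Real.sqrt (2*π)))) = fun t : ℝ =>
      Real.exp (Real.log (Real.Gamma t) -
      ((t - 1/2) * Real.log t - t + Real.log (Real.sqrt (2*π)))) from rfl] at h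
  apply h.congr'
  filter_upwards [eventually_gt_atTop (0:ℝ)] with t ht
  have hΓ : 0 < Real.Gamma t := Real.Gamma_pos_of_pos ht
  have hsq : (0:ℝ) < Real.sqrt (2*π) := Real.sqrt_pos.mpr (by positivity)
  rw [Real.exp_sub, Real.exp_log hΓ]
  congr 1
  rw [Real.exp_add, Real.exp_sub, Real.exp_log hsq,
    Real.rpow_def_of_pos ht, mul_comm (Real.log t), Real.exp_neg]
  ring


/-- Stirling-type asymptotics for `Γ(xβ + y√β + z)` as `β → ∞`. -/
theorem gamma_stirling_asymptotic (x y z : ℝ) (hx : 0 < x) :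
    Tendsto (fun β : ℝ =>
        Real.Gamma (x * β + y * Real.sqrt β + z) /
          (Real.sqrt (2 * Real.pi) *
            (x * β) ^ (x * β + y * Real.sqrt β + z - 1 / 2) *
            Real.exp (y ^ 2 / (2 * x) - x * β)))
      atTop (nhds 1) := by
  have hsqrt : Tendsto Real.sqrt atTop atTop := by
    apply tendsto_atTop_atTop_of_monotone' (fun a b h => Real.sqrt_le_sqrt h)
    rintro ⟨B, hB⟩
    have := hB (Set.mem_range_self ((B+1)^2))
    have h2 : Real.sqrt ((B+1)^2) = |B+1| := Real.sqrt_sq_eq_abs _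
    have h3 : B < |B+1| := lt_of_lt_of_le (by linarith) (le_abs_self _)
    rw [h2] at this
    linarith
  have hq : Tendsto (fun s : ℝ => x*s^2 + y*s + z) atTop atTop := by
    have h := tendsto_atTop_add_const_right atTop z
      (Tendsto.atTop_mul_atTop₀ tendsto_id
        (tendsto_atTop_add_const_right atTop y (tendsto_id.const_mul_atTop hx)))
    apply h.congr
    intro s
    simp only [id_eq]
    ring
  have h_t : Tendsto (fun β : ℝ => x*β + y*Real.sqrt β + z) atTop atTop := by
    apply (hq.comp hsqrt).congr'
    filter_upwards [eventually_ge_atTop (0:ℝ)] with β hβ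
    simp only [Function.comp_apply]
    rw [Real.sq_sqrt hβ]
  have h1 := gamma_stirling_real.comp h_t
  have h2 := (Real.continuous_exp.tendsto 0).comp ((correction_tendsto x y z hx).comp hsqrt)
  rw [Real.exp_zero] at h2
  have h3 := h1.mul h2
  rw [mul_one] at h3
  apply h3.congr'
  filter_upwards [eventually_gt_atTop (0:ℝ), h_t.eventually_gt_atTop 0] with β hβ htb
  simp only [Function.comp_apply]
  set s := Real.sqrt β with hs
  have hs2 : s^2 = β := Real.sq_sqrt hβ.le
  have hxb : (0:ℝ) < x*β := by positivity
  rw [hs2]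
  have hfrac : 1 + (y*s+z)/(x*β) = (x*β+y*s+z)/(x*β) := by field_simp; ring
  rw [hfrac, Real.log_div (ne_of_gt htb) (ne_of_gt hxb),
    Real.rpow_def_of_pos htb, Real.rpow_def_of_pos hxb,
    show Real.Gamma (x*β+y*s+z) = Real.exp (Real.log (Real.Gamma (x*β+y*s+z))) from
      (Real.exp_log (Real.Gamma_pos_of_pos htb)).symm,
    show Real.sqrt (2*π) = Real.exp (Real.log (Real.sqrt (2*π))) from
      (Real.exp_log (by positivity)).symm]
  simp only [← Real.exp_add, ← Real.exp_sub]
  rw [Real.exp_eq_exp]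
  ring
end

section
/- For fixed real x and real c_i, the Charlier weight under the Hermite scaling converges: lim_{β→∞} √(2πβ) · exp(−β − c_i√(β/2) + c_i²/4) · (β + c_i√(β/2))^{β + x√(2β)} / Γ(β + x√(2β) + 1) = exp(−x² + c_i x). -/
open Filter Real Topology


lemma lem_log_taylor {y : ℝ} (h : |y| < 1) :
    |Real.log (1+y) - y + y^2/2| ≤ |y|^3/(1-|y|) := by
  have h' : |(-y)| < 1 := by rwa [abs_neg]
  have H := Real.abs_log_sub_add_sum_range_le h' 2
  simp only [Finset.sum_range_succ, Finset.sum_range_zero] at H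
  rw [abs_neg] at H
  have e : Real.log (1+y) - y + y^2/2
      = 0 + (-y)^(0+1)/((0:ℕ)+1) + (-y)^(1+1)/((1:ℕ)+1) + Real.log (1 - -y) := by
    push_cast; ring_nf
  rw [e]; exact H

lemma lem_core (k m : ℝ) :
    Tendsto (fun s : ℝ => (s^2 + m*s) * Real.log (1 + k/s) - k*s) atTop
      (𝓝 (k*m - k^2/2)) := by
  have hA : Tendsto (fun s : ℝ => s^2 * Real.log (1 + k/s) - k*s + k^2/2) atTop (𝓝 0) := by
    have hbnd : Tendsto (fun s : ℝ => |k|^3 / (s - |k|)) atTop (𝓝 0) := by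
      have h1 : Tendsto (fun s : ℝ => s - |k|) atTop atTop :=
        tendsto_atTop_add_const_right _ _ tendsto_id
      exact Tendsto.div_atTop tendsto_const_nhds h1
    refine squeeze_zero_norm' ?_ hbnd
    filter_upwards [eventually_gt_atTop (|k| + 1)] with s hs
    have hs0 : 0 < s := lt_of_le_of_lt (by positivity) hs
    have hy : |k/s| < 1 := by
      rw [abs_div, abs_of_pos hs0, div_lt_one hs0]
      linarith [abs_nonneg k]
    have := lem_log_taylor hy
    have e : s^2 * Real.log (1 + k/s) - k*s + k^2/2
        = s^2 * (Real.log (1 + k/s) - k/s + (k/s)^2/2) := by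
      field_simp
    rw [Real.norm_eq_abs, e, abs_mul, abs_of_nonneg (sq_nonneg s)]
    calc s^2 * |Real.log (1 + k/s) - k/s + (k/s)^2/2| ≤ s^2 * (|k/s|^3/(1-|k/s|)) := by
          exact mul_le_mul_of_nonneg_left this (sq_nonneg s)
      _ = |k|^3 / (s - |k|) := by
          have h1 : (1:ℝ) - |k|/s ≠ 0 :=
            ne_of_gt (sub_pos.mpr ((div_lt_one hs0).mpr (by linarith)))
          have h2 : s - |k| ≠ 0 := by linarith
          rw [abs_div, abs_of_pos hs0, div_pow]
          field_simp
  have hB : Tendsto (fun s : ℝ => s * Real.log (1 + k/s)) atTop (𝓝 k) :=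
    Real.tendsto_mul_log_one_add_div_atTop k
  have := (hA.add (hB.const_mul m)).add_const (-k^2/2)
  have heq : ∀ᶠ s in atTop, (s^2 * Real.log (1 + k/s) - k*s + k^2/2 + m * (s * Real.log (1 + k/s))) + -k^2/2
      = (s^2 + m*s) * Real.log (1 + k/s) - k*s := by
    filter_upwards [] with s; ring
  rw [show (0:ℝ) + m*k + -k^2/2 = k*m - k^2/2 by ring] at this
  exact this.congr' heq


noncomputable def epsN (n : ℕ) : ℝ :=
  Real.log (n.factorial : ℝ) - ((n : ℝ) * Real.log n - n + Real.log (2 * Real.pi * n) / 2)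

lemma lem_eps : Tendsto epsN atTop (𝓝 0) := by
  have hpi : Real.sqrt Real.pi ≠ 0 := by positivity
  have h1 : Tendsto (fun n => Stirling.stirlingSeq n / Real.sqrt Real.pi) atTop (𝓝 1) := by
    have := Stirling.tendsto_stirlingSeq_sqrt_pi.div
      (tendsto_const_nhds : Tendsto _ atTop (𝓝 (Real.sqrt Real.pi))) hpi
    rwa [div_self hpi] at this
  have h2 : Tendsto (fun n => Real.log (Stirling.stirlingSeq n / Real.sqrt Real.pi))
      atTop (𝓝 0) := by
    have := (Real.continuousAt_log one_ne_zero).tendsto.comp h1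
    rwa [Real.log_one] at this
  refine h2.congr' ?_
  filter_upwards [eventually_ge_atTop 1] with n hn
  have hn0 : (0:ℝ) < n := by exact_mod_cast hn
  rw [Real.log_div (by
      have := Stirling.stirlingSeq'_pos (n - 1)
      rw [Nat.sub_add_cancel hn] at this
      exact this.ne') hpi,
    Stirling.log_stirlingSeq_formula, epsN]
  rw [Real.log_div hn0.ne' (Real.exp_ne_zero 1),
    Real.log_exp, Real.log_mul (by norm_num) hn0.ne',
    Real.log_mul (by positivity) hn0.ne', Real.log_mul (by norm_num) Real.pi_ne_zero,
    Real.log_sqrt Real.pi_pos.le]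
  ring


lemma gautschi_upper {n : ℕ} (hn : 1 ≤ n) {s : ℝ} (hs0 : 0 ≤ s) (hs1 : s ≤ 1) :
    Real.log (Real.Gamma ((n:ℝ) + 1 + s)) ≤
      Real.log (n.factorial : ℝ) + s * Real.log ((n:ℝ) + 1) := by
  have hconv := Real.convexOn_log_Gamma
  have h1 : ((n:ℝ) + 1) ∈ Set.Ioi (0:ℝ) := by
    simp only [Set.mem_Ioi]; positivity
  have h2 : ((n:ℝ) + 2) ∈ Set.Ioi (0:ℝ) := by
    simp only [Set.mem_Ioi]; positivity
  have key := hconv.2 h1 h2 (by linarith : (0:ℝ) ≤ 1 - s) hs0 (by ring)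
  simp only [smul_eq_mul, Function.comp_apply] at key
  have e : (1 - s) * ((n:ℝ) + 1) + s * ((n:ℝ) + 2) = (n:ℝ) + 1 + s := by ring
  rw [e] at key
  have g1 : Real.Gamma ((n:ℝ) + 1) = n.factorial := Real.Gamma_nat_eq_factorial n
  have g2 : Real.Gamma ((n:ℝ) + 2) = (n+1).factorial := by
    have := Real.Gamma_nat_eq_factorial (n+1)
    push_cast at this ⊢
    convert this using 2
    ring
  rw [g1, g2] at key
  have e2 : Real.log ((n+1).factorial : ℝ) = Real.log ((n:ℝ)+1) + Real.log (n.factorial : ℝ) := by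
    rw [Nat.factorial_succ]
    push_cast
    rw [Real.log_mul (by positivity) (by exact_mod_cast (Nat.factorial_pos n).ne')]
  rw [e2] at key
  calc Real.log (Real.Gamma ((n:ℝ) + 1 + s))
      ≤ (1-s) * Real.log (n.factorial : ℝ) + s * (Real.log ((n:ℝ)+1) + Real.log (n.factorial : ℝ)) := key
    _ = Real.log (n.factorial : ℝ) + s * Real.log ((n:ℝ) + 1) := by ring

lemma gautschi_lower {n : ℕ} (hn : 1 ≤ n) {s : ℝ} (hs0 : 0 ≤ s) (hs1 : s ≤ 1) :
    Real.log (n.factorial : ℝ) + s * Real.log (n:ℝ) ≤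
      Real.log (Real.Gamma ((n:ℝ) + 1 + s)) := by
  have hconv := Real.convexOn_log_Gamma
  have hn0 : (0:ℝ) < n := by exact_mod_cast hn
  have h1 : ((n:ℝ)) ∈ Set.Ioi (0:ℝ) := hn0
  have h2 : ((n:ℝ) + 1 + s) ∈ Set.Ioi (0:ℝ) := by
    simp only [Set.mem_Ioi]; positivity
  have hw1 : (0:ℝ) ≤ s / (1 + s) := by positivity
  have hw2 : (0:ℝ) ≤ 1 / (1 + s) := by positivity
  have hsum : s / (1+s) + 1 / (1+s) = 1 := by
    rw [← add_div, add_comm s 1, div_self (by positivity : (1:ℝ)+s ≠ 0)]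
  have key := hconv.2 h1 h2 hw1 hw2 hsum
  simp only [smul_eq_mul, Function.comp_apply] at key
  have e : s/(1+s) * (n:ℝ) + 1/(1+s) * ((n:ℝ) + 1 + s) = (n:ℝ) + 1 := by
    field_simp; ring
  rw [e] at key
  have g1 : Real.Gamma ((n:ℝ) + 1) = n.factorial := Real.Gamma_nat_eq_factorial n
  have hGpos : 0 < Real.Gamma (n:ℝ) := Real.Gamma_pos_of_pos hn0
  have hlogGn : Real.log (Real.Gamma (n:ℝ)) = Real.log (n.factorial : ℝ) - Real.log (n:ℝ) := by
    have hGn : Real.Gamma ((n:ℝ)+1) = (n:ℝ) * Real.Gamma (n:ℝ) := Real.Gamma_add_one hn0.ne'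
    rw [← g1, hGn, Real.log_mul hn0.ne' hGpos.ne']
    ring
  rw [g1, hlogGn] at key
  have h1s : (0:ℝ) < 1 + s := by linarith
  have key' := mul_le_mul_of_nonneg_left key h1s.le
  have e2 : (1+s) * (s/(1+s) * (Real.log (n.factorial : ℝ) - Real.log (n:ℝ))
      + 1/(1+s) * Real.log (Real.Gamma ((n:ℝ) + 1 + s)))
      = s*(Real.log (n.factorial : ℝ) - Real.log (n:ℝ)) + Real.log (Real.Gamma ((n:ℝ) + 1 + s)) := by
    field_simp
  rw [e2] at key'
  nlinarith [key']

noncomputable def GG (t : ℝ) : ℝ :=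
  Real.log (Real.Gamma (t + 1)) - (t * Real.log t - t + Real.log (2 * Real.pi * t) / 2)

lemma lem_G : Tendsto GG atTop (𝓝 0) := by
  have hseq : ∀ (c : ℝ), Tendsto (fun n : ℕ => epsN n + c / (n:ℝ)) atTop (𝓝 0) := by
    intro c
    have h0 : Tendsto (fun n : ℕ => c / (n:ℝ)) atTop (𝓝 0) :=
      tendsto_const_div_atTop_nhds_zero_nat c
    simpa using lem_eps.add h0
  have hfl : Tendsto (fun t : ℝ => ⌊t⌋₊) atTop atTop := tendsto_nat_floor_atTop
  have hlo : Tendsto (fun t : ℝ => epsN ⌊t⌋₊ + (-(3/2)) / (⌊t⌋₊ : ℝ)) atTop (𝓝 0) :=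
    (hseq (-(3/2))).comp hfl
  have hhi : Tendsto (fun t : ℝ => epsN ⌊t⌋₊ + (3/2) / (⌊t⌋₊ : ℝ)) atTop (𝓝 0) :=
    (hseq (3/2)).comp hfl
  refine tendsto_of_tendsto_of_tendsto_of_le_of_le' hlo hhi ?_ ?_
  all_goals {
    filter_upwards [eventually_ge_atTop (1:ℝ)] with t ht
    set n := ⌊t⌋₊ with hn_def
    have hn1 : 1 ≤ n := Nat.le_floor (by exact_mod_cast ht)
    have hnt : (n:ℝ) ≤ t := Nat.floor_le (by linarith)
    have htn : t < (n:ℝ) + 1 := Nat.lt_floor_add_one t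
    have hn0 : (0:ℝ) < n := by exact_mod_cast hn1
    have ht0 : (0:ℝ) < t := by linarith
    set s := t - (n:ℝ) with hs_def
    have hts : t = (n:ℝ) + s := by rw [hs_def]; ring
    have hs0 : 0 ≤ s := by simp [hs_def]; linarith
    have hs1 : s ≤ 1 := by simp [hs_def]; linarith
    have htns : (n:ℝ) + 1 + s = t + 1 := by rw [hts]; ring
    have glow := gautschi_lower hn1 hs0 hs1
    have gup := gautschi_upper hn1 hs0 hs1
    rw [htns] at glow gup
    have hlog_tn : Real.log t - Real.log n ≤ s / n := by
      have h := Real.log_le_sub_one_of_pos (show (0:ℝ) < t / n by positivity)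
      rw [Real.log_div ht0.ne' hn0.ne'] at h
      have e : t / (n:ℝ) - 1 = s / n := by rw [hs_def]; field_simp
      linarith [e ▸ h]
    have hlog_nt : s / t ≤ Real.log t - Real.log n := by
      have h := Real.log_le_sub_one_of_pos (show (0:ℝ) < n / t by positivity)
      rw [Real.log_div hn0.ne' ht0.ne'] at h
      have e : (n:ℝ) / t - 1 = -(s / t) := by rw [hs_def]; field_simp; ring
      rw [e] at h
      linarith
    have hmono : Real.log n ≤ Real.log t := Real.log_le_log hn0 hnt
    have hmono2 : Real.log n ≤ Real.log ((n:ℝ)+1) :=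
      Real.log_le_log hn0 (by linarith)
    have hlog_n1 : Real.log ((n:ℝ)+1) - Real.log n ≤ 1 / n := by
      have h := Real.log_le_sub_one_of_pos (show (0:ℝ) < ((n:ℝ)+1) / n by positivity)
      rw [Real.log_div (by positivity) hn0.ne'] at h
      have e : ((n:ℝ)+1) / n - 1 = 1 / n := by field_simp; ring
      linarith [e ▸ h]
    have hsplit_t : Real.log (2*Real.pi*t) = Real.log (2*Real.pi) + Real.log t :=
      Real.log_mul (by positivity) ht0.ne'
    have hsplit_n : Real.log (2*Real.pi*(n:ℝ)) = Real.log (2*Real.pi) + Real.log n :=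
      Real.log_mul (by positivity) hn0.ne'
    have e4 : t * Real.log n = (n:ℝ) * Real.log n + s * Real.log n := by
      rw [hts]; ring
    have p1 : t * (Real.log t - Real.log n) ≤ s + s*s/n := by
      calc t * (Real.log t - Real.log n) ≤ t * (s/n) :=
            mul_le_mul_of_nonneg_left hlog_tn ht0.le
        _ = s + s*s/n := by rw [hs_def]; field_simp; ring
    have p2 : s * s ≤ 1 := by nlinarith
    have q1 : s * (Real.log ((n:ℝ)+1) - Real.log n) ≤ 1 * (1/n) :=
      mul_le_mul hs1 hlog_n1 (by linarith) one_pos.le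
    have q2 : s ≤ (Real.log t - Real.log n) * t := (div_le_iff₀ ht0).mp hlog_nt
    have r1 : s / n ≤ 1 / n := by gcongr
    have r2 : s*s/n ≤ 1/n := by gcongr
    have hinv : (0:ℝ) ≤ 1/n := by positivity
    have e5 : (3:ℝ)/2/(n:ℝ) = (3/2)*(1/n) := by ring
    have e6 : -((3:ℝ)/2)/(n:ℝ) = -((3/2)*(1/n)) := by ring
    clear_value s n
    simp only [GG, epsN, hsplit_t, hsplit_n]
    linarith [glow, gup, p1, p2, q1, q2, r1, r2, e4, hmono, hlog_tn, hinv, e5, e6]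
  }

/-- The Charlier weight under the Hermite scaling converges to the Hermite weight. -/
theorem charlier_to_hermite_weight (x c : ℝ) :
    Tendsto (fun β : ℝ =>
        Real.sqrt (2 * Real.pi * β) *
          Real.exp (-β - c * Real.sqrt (β / 2) + c ^ 2 / 4) *
          (β + c * Real.sqrt (β / 2)) ^ (β + x * Real.sqrt (2 * β)) /
          Real.Gamma (β + x * Real.sqrt (2 * β) + 1))
      atTop (nhds (Real.exp (-x ^ 2 + c * x))) := by
  have h2 : Real.sqrt 2 * Real.sqrt 2 = 2 := Real.mul_self_sqrt (by norm_num)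
  have h2' : (0:ℝ) < Real.sqrt 2 := by positivity
  have key : Tendsto (fun s : ℝ =>
      Real.sqrt (2 * Real.pi * s^2) *
        Real.exp (-s^2 - c * Real.sqrt (s^2 / 2) + c ^ 2 / 4) *
        (s^2 + c * Real.sqrt (s^2 / 2)) ^ (s^2 + x * Real.sqrt (2 * s^2)) /
        Real.Gamma (s^2 + x * Real.sqrt (2 * s^2) + 1))
      atTop (𝓝 (Real.exp (-x ^ 2 + c * x))) := by
    -- limits of the pieces
    have hp1 : Tendsto (fun s : ℝ => Real.log (1 + Real.sqrt 2 * x / s)) atTop (𝓝 0) := by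
      have hb : Tendsto (fun s : ℝ => 1 + Real.sqrt 2 * x / s) atTop (𝓝 1) := by
        have hd := Tendsto.div_atTop
          (tendsto_const_nhds : Tendsto (fun _ : ℝ => Real.sqrt 2 * x) atTop (𝓝 (Real.sqrt 2 * x)))
          (tendsto_id (α := ℝ))
        simpa using tendsto_const_nhds.add hd
      have := (Real.continuousAt_log one_ne_zero).tendsto.comp hb
      rwa [Real.log_one] at this
    have hp2 := lem_core (c / Real.sqrt 2) (Real.sqrt 2 * x)
    have hp3 := lem_core (Real.sqrt 2 * x) (Real.sqrt 2 * x)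
    have hp4 : Tendsto (fun s : ℝ => GG (s^2 + Real.sqrt 2 * x * s)) atTop (𝓝 0) := by
      refine lem_G.comp ?_
      refine tendsto_atTop_mono' atTop ?_ tendsto_id
      filter_upwards [eventually_ge_atTop (1 + Real.sqrt 2 * |x|)] with s hs
      have hx0 : (0:ℝ) ≤ Real.sqrt 2 * |x| := by positivity
      have hs0 : 0 < s := by linarith
      have hneg : -(Real.sqrt 2 * |x|) ≤ Real.sqrt 2 * x := by
        rw [← mul_neg]
        exact mul_le_mul_of_nonneg_left (neg_abs_le x) h2'.le
      have key2 : 0 ≤ s * (s - Real.sqrt 2 * |x| - 1) := mul_nonneg hs0.le (by linarith)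
      simp only [id_eq]
      nlinarith [mul_le_mul_of_nonneg_right hneg hs0.le, key2]
    have hE := ((((hp1.const_mul (-(1/2))).add hp2).sub hp3).add_const (c^2/4)).sub hp4
    have e1 : c / Real.sqrt 2 * (Real.sqrt 2 * x) = c * x := by
      field_simp
    have e2 : (c / Real.sqrt 2)^2 = c^2/2 := by
      rw [div_pow, Real.sq_sqrt (by norm_num : (0:ℝ) ≤ 2)]
    have e3 : Real.sqrt 2 * x * (Real.sqrt 2 * x) = 2*x^2 := by
      linear_combination x^2 * h2
    have e4 : (Real.sqrt 2 * x)^2 = 2*x^2 := by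
      rw [mul_pow, Real.sq_sqrt (by norm_num : (0:ℝ) ≤ 2)]
    have hval : -(1/2) * 0 + (c / Real.sqrt 2 * (Real.sqrt 2 * x) - (c / Real.sqrt 2)^2/2)
        - (Real.sqrt 2 * x * (Real.sqrt 2 * x) - (Real.sqrt 2 * x)^2/2) + c^2/4 - 0
        = -x^2 + c*x := by
      rw [e1, e2, e3, e4]; ring
    rw [← hval]
    refine Tendsto.congr' ?_ ((Real.continuous_exp.tendsto _).comp hE)
    filter_upwards [eventually_ge_atTop (2 + 2*|c| + 2*|x|)] with s hs
    have hs0 : (0:ℝ) < s := by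
      have := abs_nonneg c; have := abs_nonneg x; linarith
    simp only [Function.comp_apply]
    have hcabs : -|c| * s ≤ c / Real.sqrt 2 * s := by
      have hd : |c / Real.sqrt 2| ≤ |c| := by
        rw [abs_div, abs_of_pos h2']
        exact div_le_self (abs_nonneg c) (by nlinarith [h2, h2'.le])
      have := neg_abs_le (c / Real.sqrt 2)
      exact mul_le_mul_of_nonneg_right (by linarith) hs0.le
    have hq1 : Real.sqrt (2*Real.pi*s^2) = Real.sqrt (2*Real.pi) * s := by
      rw [Real.sqrt_mul (by positivity) (s^2), Real.sqrt_sq hs0.le]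
    have hq2 : Real.sqrt (s^2/2) = s / Real.sqrt 2 := by
      rw [show s^2/2 = (s/Real.sqrt 2)^2 by
        rw [div_pow, Real.sq_sqrt (by norm_num : (0:ℝ) ≤ 2)], Real.sqrt_sq (by positivity)]
    have hq3 : Real.sqrt (2*s^2) = Real.sqrt 2 * s := by
      rw [Real.sqrt_mul (by norm_num : (0:ℝ) ≤ 2), Real.sqrt_sq hs0.le]
    rw [hq1, hq2, hq3]
    rw [show c * (s / Real.sqrt 2) = c / Real.sqrt 2 * s from by ring,
        show x * (Real.sqrt 2 * s) = Real.sqrt 2 * x * s from by ring]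
    have ha0 : 0 < s^2 + c / Real.sqrt 2 * s := by
      have hp : 0 < s * (s - |c|) := mul_pos hs0 (by linarith [abs_nonneg x, abs_nonneg c])
      nlinarith [hcabs]
    have hx2 : -(2*|x|)*s ≤ Real.sqrt 2 * x * s := by
      have hb : |Real.sqrt 2 * x| = Real.sqrt 2 * |x| := by rw [abs_mul, abs_of_pos h2']
      have hc2 : -(2*|x|) ≤ Real.sqrt 2 * x := by
        have := neg_abs_le (Real.sqrt 2 * x)
        rw [hb] at this
        nlinarith [abs_nonneg x, h2, h2'.le]
      exact mul_le_mul_of_nonneg_right hc2 hs0.le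
    have ht0 : 0 < s^2 + Real.sqrt 2 * x * s := by
      have hp : 0 < s * (s - 2*|x|) := mul_pos hs0 (by linarith [abs_nonneg c])
      nlinarith [hx2]
    have htp1 : (0:ℝ) < s^2 + Real.sqrt 2 * x * s + 1 := by linarith
    have hGpos := Real.Gamma_pos_of_pos htp1
    rw [Real.rpow_def_of_pos ha0]
    have hR : Real.sqrt (2*Real.pi) * s * Real.exp (-s^2 - c/Real.sqrt 2*s + c^2/4) *
        Real.exp (Real.log (s^2 + c/Real.sqrt 2*s) * (s^2 + Real.sqrt 2*x*s)) /
        Real.Gamma (s^2 + Real.sqrt 2*x*s + 1)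
        = Real.exp (Real.log (2*Real.pi)/2 + Real.log s + (-s^2 - c/Real.sqrt 2*s + c^2/4)
            + Real.log (s^2 + c/Real.sqrt 2*s) * (s^2 + Real.sqrt 2*x*s)
            - Real.log (Real.Gamma (s^2 + Real.sqrt 2*x*s + 1))) := by
      have hsplit : ∀ A B C D E : ℝ, Real.exp (A + B + C + D - E)
          = Real.exp A * Real.exp B * Real.exp C * Real.exp D / Real.exp E := by
        intro A B C D E
        rw [Real.exp_sub, Real.exp_add, Real.exp_add, Real.exp_add]
      rw [hsplit, Real.exp_log hGpos, Real.exp_log hs0,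
        show Real.exp (Real.log (2*Real.pi)/2) = Real.sqrt (2*Real.pi) from by
          rw [← Real.log_sqrt (by positivity), Real.exp_log (by positivity)]]
    rw [show -s^2 - c / Real.sqrt 2 * s + c^2/4 = -s^2 - c/Real.sqrt 2*s + c^2/4 from by ring]
    rw [hR]
    congr 1
    have hl1 : Real.log (1 + Real.sqrt 2 * x / s)
        = Real.log (s^2 + Real.sqrt 2*x*s) - 2*Real.log s := by
      rw [show (1:ℝ) + Real.sqrt 2 * x / s = (s^2 + Real.sqrt 2*x*s)/s^2 from by
        field_simp]
      rw [Real.log_div ht0.ne' (by positivity), Real.log_pow]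
      push_cast; ring
    have hl2 : Real.log (1 + c / Real.sqrt 2 / s)
        = Real.log (s^2 + c/Real.sqrt 2*s) - 2*Real.log s := by
      rw [show (1:ℝ) + c / Real.sqrt 2 / s = (s^2 + c/Real.sqrt 2*s)/s^2 from by
        field_simp]
      rw [Real.log_div ha0.ne' (by positivity), Real.log_pow]
      push_cast; ring
    simp only [GG]
    rw [hl1, hl2, Real.log_mul (by positivity : (2*Real.pi : ℝ) ≠ 0) ht0.ne']
    ring
  -- transfer from s to β
  have hsq : Tendsto Real.sqrt atTop atTop := by
    refine tendsto_atTop_atTop.mpr fun b => ⟨(max b 0)^2, fun a ha => ?_⟩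
    calc b ≤ max b 0 := le_max_left _ _
      _ = Real.sqrt ((max b 0)^2) := (Real.sqrt_sq (le_max_right _ _)).symm
      _ ≤ Real.sqrt a := Real.sqrt_le_sqrt ha
  refine (key.comp hsq).congr' ?_
  filter_upwards [eventually_ge_atTop (0:ℝ)] with β hβ
  simp only [Function.comp_apply, Real.sq_sqrt hβ]
end

section
/- For fixed real x and real c_i, the Laguerre second kind weight under the Hermite scaling converges: lim_{β→∞} β^{−β} e^{β − c_i√(β/2)} · (β + x√(2β))^{β} · exp(−(1 − c_i/√(2β))(β + x√(2β))) = exp(−x² + c_i x). -/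
open Filter Real

lemma sqrt_two_div_tendsto : Tendsto (fun β : ℝ => Real.sqrt (2 / β)) atTop (nhds 0) := by
  have h1 : Tendsto (fun β : ℝ => 2 / β) atTop (nhds (0 : ℝ)) := by
    simpa [div_eq_mul_inv] using tendsto_inv_atTop_zero.const_mul (2 : ℝ)
  have := (Real.continuous_sqrt.tendsto 0).comp h1
  simpa only [Function.comp_def, Real.sqrt_zero] using this

lemma u_tendsto (x : ℝ) :
    Tendsto (fun β : ℝ => x * Real.sqrt (2 / β)) atTop (nhds 0) := by
  simpa using sqrt_two_div_tendsto.const_mul x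

lemma log_limit (x : ℝ) :
    Tendsto (fun β : ℝ => β * Real.log (1 + x * Real.sqrt (2 / β)) - x * Real.sqrt (2 * β))
      atTop (nhds (-x ^ 2)) := by
  rw [tendsto_iff_dist_tendsto_zero]
  apply squeeze_zero' (g := fun β : ℝ => 4 * |x| ^ 3 * Real.sqrt (2 / β))
  · exact Eventually.of_forall fun β => dist_nonneg
  · filter_upwards [eventually_ge_atTop (1 : ℝ),
      NormedAddCommGroup.tendsto_nhds_zero.mp (u_tendsto x) (1/2) (by norm_num)] with β hβ1 hu
    have hβ0 : (0:ℝ) < β := lt_of_lt_of_le one_pos hβ1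
    set u := x * Real.sqrt (2 / β) with hu_def
    rw [Real.norm_eq_abs] at hu
    have hsq : Real.sqrt (2 / β) ^ 2 = 2 / β := Real.sq_sqrt (by positivity)
    have hbu : x * Real.sqrt (2 * β) = β * u := by
      rw [hu_def]
      rw [show (2 : ℝ) * β = (2 / β) * β ^ 2 by field_simp]
      rw [Real.sqrt_mul (by positivity), Real.sqrt_sq hβ0.le]
      ring
    have hx2 : x ^ 2 = β * u ^ 2 / 2 := by
      rw [hu_def, mul_pow, hsq]
      field_simp
    rw [Real.dist_eq]
    have e1 : β * Real.log (1 + u) - x * Real.sqrt (2 * β) - (-x ^ 2)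
        = β * (Real.log (1 + u) - u + u ^ 2 / 2) := by
      rw [hbu, hx2]; ring
    rw [e1, abs_mul, abs_of_pos hβ0]
    have hu1 : |(-u : ℝ)| < 1 := by rw [abs_neg]; linarith
    have key := Real.abs_log_sub_add_sum_range_le hu1 2
    have hsum : (∑ i ∈ Finset.range 2, (-u) ^ (i + 1) / (i + 1)) = -u + u ^ 2 / 2 := by
      simp [Finset.sum_range_succ]
      ring
    rw [hsum, sub_neg_eq_add, abs_neg] at key
    norm_num only at key
    have e2 : Real.log (1 + u) - u + u ^ 2 / 2 = -u + u ^ 2 / 2 + Real.log (1 + u) := by ring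
    rw [e2]
    have h3 : |u| ^ 3 / (1 - |u|) ≤ 2 * |u| ^ 3 := by
      rw [div_le_iff₀ (by rw [abs_neg] at hu1; linarith : (0:ℝ) < 1 - |u|)]
      nlinarith [mul_nonneg (pow_nonneg (abs_nonneg u) 3) (by linarith : (0:ℝ) ≤ 1 - 2*|u|)]
    have h4 : |u| ^ 3 = |x| ^ 3 * ((2 / β) * Real.sqrt (2 / β)) := by
      rw [hu_def, abs_mul, abs_of_nonneg (Real.sqrt_nonneg _), mul_pow, show Real.sqrt (2/β) ^ 3 = (2/β) * Real.sqrt (2/β) from by rw [pow_succ, hsq]]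
    calc β * |(-u + u ^ 2 / 2 + Real.log (1 + u))| ≤ β * (|u| ^ 3 / (1 - |u|)) :=
          mul_le_mul_of_nonneg_left key hβ0.le
      _ ≤ β * (2 * |u| ^ 3) := mul_le_mul_of_nonneg_left h3 hβ0.le
      _ = 4 * |x| ^ 3 * Real.sqrt (2 / β) := by rw [h4]; field_simp; ring
  · simpa using sqrt_two_div_tendsto.const_mul (4 * |x| ^ 3)

/-- The Laguerre second kind weight under the Hermite scaling converges to the
Hermite weight. -/
theorem laguerre2_to_hermite_weight (x c : ℝ) :
    Tendsto (fun β : ℝ =>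
        β ^ (-β) * Real.exp (β - c * Real.sqrt (β / 2)) *
          (β + x * Real.sqrt (2 * β)) ^ β *
          Real.exp (-(1 - c / Real.sqrt (2 * β)) * (β + x * Real.sqrt (2 * β))))
      atTop (nhds (Real.exp (-x ^ 2 + c * x))) := by
  have hF : Tendsto (fun β : ℝ =>
      β * Real.log (1 + x * Real.sqrt (2 / β)) - x * Real.sqrt (2 * β) + c * x)
      atTop (nhds (-x ^ 2 + c * x)) := (log_limit x).add_const _
  have hexp := (Real.continuous_exp.tendsto _).comp hF
  apply hexp.congr'
  filter_upwards [eventually_gt_atTop (0 : ℝ),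
      NormedAddCommGroup.tendsto_nhds_zero.mp (u_tendsto x) (1/2) (by norm_num)] with β hβ0 hu
  rw [Real.norm_eq_abs] at hu
  dsimp only [Function.comp]
  set s := Real.sqrt (2 * β) with hs_def
  have hs0 : 0 < s := Real.sqrt_pos.mpr (by positivity)
  have hsq : Real.sqrt (2 / β) = s / β := by
    rw [hs_def, show (2:ℝ) / β = (2 * β) / β ^ 2 by field_simp,
      Real.sqrt_div (by positivity), Real.sqrt_sq hβ0.le]
  have hhalf : Real.sqrt (β / 2) = β / s := by
    rw [hs_def, show β / 2 = β ^ 2 / (2 * β) by field_simp,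
      Real.sqrt_div (by positivity), Real.sqrt_sq hβ0.le]
  rw [hsq] at hu ⊢
  have h1u : 0 < 1 + x * (s / β) := by
    have := abs_lt.mp hu
    linarith [this.1]
  have hfac : β + x * s = β * (1 + x * (s / β)) := by field_simp
  have hpos : 0 < β + x * s := by rw [hfac]; positivity
  rw [Real.rpow_def_of_pos hβ0, Real.rpow_def_of_pos hpos, hhalf,
    ← Real.exp_add, ← Real.exp_add, ← Real.exp_add, Real.exp_eq_exp]
  rw [hfac, Real.log_mul hβ0.ne' h1u.ne']
  field_simp
  ring
end

section
/- For fixed real x ≥ 0 and α > −1, the Meixner second kind weight under Laguerre first kind scaling converges: lim_{c→1⁻} (1−c)^α Γ(α+1) · Γ(α + x/(1−c) + 1)/(Γ(α+1) Γ(x/(1−c) + 1)) · c^{x/(1−c)} = x^α e^{−x}. -/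
open Filter Real Topology

/-- Gamma ratio asymptotic for exponents in `(0, 1]`. -/
lemma gamma_ratio_tendsto_aux {β : ℝ} (hβ0 : 0 < β) (hβ1 : β ≤ 1) :
    Tendsto (fun y : ℝ => Real.Gamma (y + β) / (Real.Gamma y * y ^ β)) atTop (𝓝 1) := by
  rcases eq_or_lt_of_le hβ1 with rfl | hβ1
  · refine Tendsto.congr' ?_ tendsto_const_nhds
    filter_upwards [eventually_gt_atTop (0 : ℝ)] with y hy
    rw [Real.Gamma_add_one (ne_of_gt hy), Real.rpow_one]
    field_simp [ne_of_gt (Real.Gamma_pos_of_pos hy)]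
  · have hL : Tendsto (fun y : ℝ => (y / (y + β)) ^ (1 - β)) atTop (𝓝 1) := by
      have h1 : Tendsto (fun y : ℝ => y / (y + β)) atTop (𝓝 1) := by
        have : Tendsto (fun y : ℝ => 1 - β / (y + β)) atTop (𝓝 (1 - 0)) :=
          tendsto_const_nhds.sub
            (tendsto_const_nhds.div_atTop (tendsto_atTop_add_const_right _ β tendsto_id))
        rw [sub_zero] at this
        refine this.congr' ?_
        filter_upwards [eventually_gt_atTop (0 : ℝ)] with y hy
        have hyβ : y + β ≠ 0 := by positivity
        field_simp
        ring
      have := h1.rpow_const (p := 1 - β) (Or.inl one_ne_zero)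
      simpa using this
    refine tendsto_of_tendsto_of_tendsto_of_le_of_le' hL tendsto_const_nhds ?_ ?_
    · -- lower bound: Γ(y+1) ≤ Γ(y+β)^β * Γ(y+β+1)^(1-β)
      filter_upwards [eventually_gt_atTop (0 : ℝ)] with y hy
      have hyβ : 0 < y + β := by positivity
      have hG : 0 < Real.Gamma y := Real.Gamma_pos_of_pos hy
      have hGβ : 0 < Real.Gamma (y + β) := Real.Gamma_pos_of_pos hyβ
      have key : Real.Gamma (y + 1) ≤
          Real.Gamma (y + β) ^ β * Real.Gamma (y + β + 1) ^ (1 - β) := by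
        have := Real.Gamma_mul_add_mul_le_rpow_Gamma_mul_rpow_Gamma
          (s := y + β) (t := y + β + 1) hyβ (by positivity) hβ0
          (by linarith : (0:ℝ) < 1 - β) (by ring)
        have harg : β * (y + β) + (1 - β) * (y + β + 1) = y + 1 := by ring
        rwa [harg] at this
      rw [Real.Gamma_add_one (ne_of_gt hy)] at key
      rw [Real.Gamma_add_one (ne_of_gt hyβ)] at key
      have key2 : y * Real.Gamma y ≤
          Real.Gamma (y + β) * (y + β) ^ (1 - β) := by
        calc y * Real.Gamma y ≤ Real.Gamma (y + β) ^ β * ((y + β) * Real.Gamma (y + β)) ^ (1 - β) := key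
        _ = Real.Gamma (y + β) * (y + β) ^ (1 - β) := by
            rw [Real.mul_rpow (le_of_lt hyβ) (le_of_lt hGβ), ← mul_assoc,
              mul_comm (Real.Gamma (y + β) ^ β), mul_assoc,
              ← Real.rpow_add hGβ]
            ring_nf
            rw [Real.rpow_one]
      rw [Real.div_rpow (le_of_lt hy) (le_of_lt hyβ), div_le_div_iff₀ (by positivity) (by positivity)]
      have hy1β : y ^ (1 - β) = y / y ^ β := by
        rw [eq_div_iff (ne_of_gt (Real.rpow_pos_of_pos hy β)), ← Real.rpow_add hy]
        norm_num
      rw [hy1β, div_mul_eq_mul_div, mul_div_assoc,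
        mul_div_cancel_right₀ _ (ne_of_gt (Real.rpow_pos_of_pos hy β))]
      exact key2
    · -- upper bound: Γ(y+β) ≤ Γ(y)^(1-β) * Γ(y+1)^β = Γ(y) * y^β
      filter_upwards [eventually_gt_atTop (0 : ℝ)] with y hy
      have hG : 0 < Real.Gamma y := Real.Gamma_pos_of_pos hy
      have key : Real.Gamma (y + β) ≤ Real.Gamma y ^ (1 - β) * Real.Gamma (y + 1) ^ β := by
        have := Real.Gamma_mul_add_mul_le_rpow_Gamma_mul_rpow_Gamma
          (s := y) (t := y + 1) hy (by positivity) (by linarith : (0:ℝ) < 1 - β) hβ0 (by ring)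
        have harg : (1 - β) * y + β * (y + 1) = y + β := by ring
        rwa [harg] at this
      rw [Real.Gamma_add_one (ne_of_gt hy), mul_comm y, Real.mul_rpow (le_of_lt hG) (le_of_lt hy),
        ← mul_assoc, ← Real.rpow_add hG] at key
      norm_num at key
      rw [div_le_one (by positivity)]
      exact key

/-- Gamma ratio asymptotic for all positive exponents. -/
lemma gamma_ratio_tendsto {β : ℝ} (hβ0 : 0 < β) :
    Tendsto (fun y : ℝ => Real.Gamma (y + β) / (Real.Gamma y * y ^ β)) atTop (𝓝 1) := by
  obtain ⟨n, hn⟩ : ∃ n : ℕ, β ≤ n + 1 := ⟨⌈β⌉₊, le_trans (Nat.le_ceil β) (by norm_num)⟩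
  induction n generalizing β with
  | zero => exact gamma_ratio_tendsto_aux hβ0 (by simpa using hn)
  | succ n ih =>
    rcases le_or_gt β 1 with h1 | h1
    · exact gamma_ratio_tendsto_aux hβ0 h1
    · have hβ' : 0 < β - 1 := by linarith
      have hn' : β - 1 ≤ n + 1 := by push_cast at hn ⊢; linarith
      have hprev := ih hβ' hn'
      have hfac : Tendsto (fun y : ℝ => (y + (β - 1)) / y) atTop (𝓝 1) := by
        have : Tendsto (fun y : ℝ => 1 + (β - 1) / y) atTop (𝓝 (1 + 0)) :=
          tendsto_const_nhds.add (tendsto_const_nhds.div_atTop tendsto_id)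
        rw [add_zero] at this
        refine this.congr' ?_
        filter_upwards [eventually_gt_atTop (0 : ℝ)] with y hy
        field_simp
      have := hprev.mul hfac
      rw [mul_one] at this
      refine this.congr' ?_
      filter_upwards [eventually_gt_atTop (0 : ℝ)] with y hy
      have hyβ : 0 < y + (β - 1) := by positivity
      have hG : 0 < Real.Gamma y := Real.Gamma_pos_of_pos hy
      have hβeq : y + β = (y + (β - 1)) + 1 := by ring
      rw [hβeq, Real.Gamma_add_one (ne_of_gt hyβ)]
      have hyβpow : y ^ β = y ^ (β - 1) * y := by
        rw [← Real.rpow_add_one (ne_of_gt hy)]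
        ring_nf
      rw [hyβpow]
      field_simp

/-- The Meixner second kind weight under the Laguerre first kind scaling converges
to the Laguerre first kind weight as `c → 1⁻`. -/
theorem meixner2_to_laguerre1_weight (x α : ℝ) (hx : 0 < x) (hα : -1 < α) :
    Tendsto (fun c : ℝ =>
        (1 - c) ^ α * Real.Gamma (α + 1) *
          (Real.Gamma (α + x / (1 - c) + 1) /
            (Real.Gamma (α + 1) * Real.Gamma (x / (1 - c) + 1))) *
          c ^ (x / (1 - c)))
      (nhdsWithin 1 (Set.Iio 1))
      (nhds (x ^ α * Real.exp (-x))) := by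
  have hβ : 0 < α + 1 := by linarith
  -- y := x / (1 - c) tends to atTop
  have hy : Tendsto (fun c : ℝ => x / (1 - c)) (nhdsWithin 1 (Set.Iio 1)) atTop := by
    have h1 : Tendsto (fun c : ℝ => 1 - c) (nhdsWithin 1 (Set.Iio 1)) (nhdsWithin 0 (Set.Ioi 0)) := by
      apply tendsto_nhdsWithin_of_tendsto_nhds_of_eventually_within
      · have : Tendsto (fun c : ℝ => 1 - c) (nhds 1) (nhds (1 - 1)) :=
          (continuous_const.sub continuous_id).tendsto 1
        rw [sub_self] at this
        exact this.mono_left nhdsWithin_le_nhds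
      · filter_upwards [self_mem_nhdsWithin] with c hc
        simpa using hc
    have h2 := tendsto_inv_nhdsGT_zero.comp h1
    have h3 := h2.const_mul_atTop hx
    refine h3.congr fun c => ?_
    simp [div_eq_mul_inv, Function.comp]
  -- the gamma-ratio factor
  have hratio : Tendsto
      (fun y : ℝ => Real.Gamma (y + (α + 1)) / (Real.Gamma y * y ^ (α + 1)))
      atTop (𝓝 1) := gamma_ratio_tendsto hβ
  -- the exponential factor
  have hexp : Tendsto (fun c : ℝ => c ^ (x / (1 - c))) (nhdsWithin 1 (Set.Iio 1))
      (𝓝 (Real.exp (-x))) := by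
    have h := (tendsto_one_add_div_rpow_exp (-x)).comp hy
    refine h.congr' ?_
    filter_upwards [hy.eventually (eventually_gt_atTop (0 : ℝ)), self_mem_nhdsWithin]
      with c hc hc'
    have h1c : (0:ℝ) < 1 - c := by simp at hc'; linarith
    have hne : x / (1 - c) ≠ 0 := ne_of_gt hc
    have heq : 1 + -x / (x / (1 - c)) = c := by
      field_simp
      ring
    simp only [Function.comp]
    rw [heq]
  -- the polynomial/gamma factor
  have hmain : Tendsto (fun c : ℝ =>
      (1 - c) ^ α * Real.Gamma (α + 1) *
        (Real.Gamma (α + x / (1 - c) + 1) /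
          (Real.Gamma (α + 1) * Real.Gamma (x / (1 - c) + 1))))
      (nhdsWithin 1 (Set.Iio 1)) (𝓝 (x ^ α)) := by
    have h := (hratio.comp hy).const_mul (x ^ α)
    rw [mul_one] at h
    refine h.congr' ?_
    filter_upwards [hy.eventually (eventually_gt_atTop (0 : ℝ)), self_mem_nhdsWithin]
      with c hyc hc'
    have h1c : (0:ℝ) < 1 - c := by simp at hc'; linarith
    simp only [Function.comp]
    set y := x / (1 - c) with hydef
    clear_value y
    have h1ceq : 1 - c = x / y := by
      rw [hydef]; field_simp
    have hGy : 0 < Real.Gamma y := Real.Gamma_pos_of_pos hyc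
    have hGβ : 0 < Real.Gamma (α + 1) := Real.Gamma_pos_of_pos hβ
    have hpow : (1 - c) ^ α = x ^ α / y ^ α := by
      rw [h1ceq, Real.div_rpow (le_of_lt hx) (le_of_lt hyc)]
    have hGy1 : Real.Gamma (y + 1) = y * Real.Gamma y := Real.Gamma_add_one (ne_of_gt hyc)
    have hargeq : α + y + 1 = y + (α + 1) := by ring
    rw [hargeq, hpow, hGy1]
    have hypow : y ^ (α + 1) = y ^ α * y := by
      rw [← Real.rpow_add_one (ne_of_gt hyc)]
    rw [hypow]
    have hyα : 0 < y ^ α := Real.rpow_pos_of_pos hyc α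
    field_simp
  have := hmain.mul hexp
  exact this
end

section
/- For fixed real x and real c_i, the Kravchuk weight under the Hermite scaling converges: lim_{N→∞} √(πN/2) e^{c_i²/4} · Γ(N+1)/(Γ(N/2 + x√(N/2) + 1) Γ(N/2 − x√(N/2) + 1)) · (1/2 + c_i/(2√(2N)))^{N/2 + x√(N/2)} (1/2 − c_i/(2√(2N)))^{N/2 − x√(N/2)} = exp(−x² + c_i x). -/
open Filter Real Set

lemma log_one_add_le {v : ℝ} (hv : 0 ≤ v) : Real.log (1 + v) ≤ v := by
  have := Real.log_le_sub_one_of_pos (show (0:ℝ) < 1 + v by linarith)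
  linarith

lemma le_log_one_add {v : ℝ} (hv : 0 ≤ v) : v - v ^ 2 ≤ Real.log (1 + v) := by
  have h1 : (0:ℝ) < 1 + v := by linarith
  have := Real.log_le_sub_one_of_pos (show (0:ℝ) < (1+v)⁻¹ by positivity)
  rw [Real.log_inv] at this
  have h2 : (1+v)⁻¹ - 1 = -(v/(1+v)) := by field_simp; ring
  rw [h2] at this
  have h3 : v / (1+v) ≤ Real.log (1+v) := by linarith
  have h4 : v - v^2 ≤ v / (1+v) := by
    rw [le_div_iff₀ h1]; nlinarith
  linarith [h4.trans h3]

lemma wendel_upper {y θ : ℝ} (hy : 0 < y) (h0 : 0 ≤ θ) (h1 : θ ≤ 1) :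
    Real.log (Real.Gamma (y + θ)) ≤ Real.log (Real.Gamma y) + θ * Real.log y := by
  rcases eq_or_lt_of_le h0 with h|h0'
  · simp [← h]
  have hx : y ∈ Ioi (0:ℝ) := hy
  have hx1 : y + 1 ∈ Ioi (0:ℝ) := by simp; linarith
  have hc := Real.convexOn_log_Gamma.2 hx hx1 (by linarith : (0:ℝ) ≤ 1 - θ) h0 (by ring)
  simp only [smul_eq_mul, Function.comp_apply] at hc
  have he : (1 - θ) * y + θ * (y + 1) = y + θ := by ring
  rw [he] at hc
  have hG : Real.log (Real.Gamma (y + 1)) = Real.log y + Real.log (Real.Gamma y) := by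
    rw [Real.Gamma_add_one hy.ne', Real.log_mul hy.ne' (Real.Gamma_pos_of_pos hy).ne']
  rw [hG] at hc
  nlinarith [hc]

lemma wendel_lower {y θ : ℝ} (hy : 0 < y) (h0 : 0 ≤ θ) (h1 : θ ≤ 1) :
    Real.log (Real.Gamma y) + Real.log y - (1 - θ) * Real.log (y + θ) ≤
      Real.log (Real.Gamma (y + θ)) := by
  have hyt : 0 < y + θ := by linarith
  have hx : y + θ ∈ Ioi (0:ℝ) := hyt
  have hx1 : y + θ + 1 ∈ Ioi (0:ℝ) := by simp; linarith
  have hc := Real.convexOn_log_Gamma.2 hx hx1 h0 (by linarith : (0:ℝ) ≤ 1 - θ) (by ring)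
  simp only [smul_eq_mul, Function.comp_apply] at hc
  have he : θ * (y + θ) + (1 - θ) * (y + θ + 1) = y + 1 := by ring
  rw [he] at hc
  have hG1 : Real.log (Real.Gamma (y + 1)) = Real.log y + Real.log (Real.Gamma y) := by
    rw [Real.Gamma_add_one hy.ne', Real.log_mul hy.ne' (Real.Gamma_pos_of_pos hy).ne']
  have hG2 : Real.log (Real.Gamma (y + θ + 1)) =
      Real.log (y + θ) + Real.log (Real.Gamma (y + θ)) := by
    rw [Real.Gamma_add_one hyt.ne', Real.log_mul hyt.ne' (Real.Gamma_pos_of_pos hyt).ne']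
  rw [hG1, hG2] at hc
  nlinarith [hc]

noncomputable def eps (s : ℝ) : ℝ :=
  Real.log (Real.Gamma (s + 1)) - (s * Real.log s - s + Real.log (2 * Real.pi * s) / 2)

lemma eps_nat : Tendsto (fun n : ℕ => eps n) atTop (nhds 0) := by
  have h1 : Tendsto (fun n : ℕ => Real.log (Stirling.stirlingSeq n) - Real.log Real.pi / 2)
      atTop (nhds 0) := by
    have := (Stirling.tendsto_stirlingSeq_sqrt_pi.log (by positivity)).sub_const
      (Real.log Real.pi / 2)
    rw [Real.log_sqrt Real.pi_pos.le, sub_self] at this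
    exact this
  refine h1.congr' ?_
  filter_upwards [eventually_ge_atTop 1] with n hn
  have hn0 : (0:ℝ) < (n:ℝ) := by exact_mod_cast hn
  have hf := Stirling.log_stirlingSeq_formula n
  have hM : (n:ℝ) * Real.log ((n:ℝ) / Real.exp 1) = (n:ℝ) * Real.log n - n := by
    rw [Real.log_div hn0.ne' (Real.exp_pos 1).ne', Real.log_exp]; ring
  have hG : Real.log (Real.Gamma ((n:ℝ) + 1)) = Real.log (n.factorial) := by
    rw [Real.Gamma_nat_eq_factorial]
  have h2pi : Real.log (2 * Real.pi * (n:ℝ)) = Real.log Real.pi + Real.log (2 * n) := by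
    rw [show 2 * Real.pi * (n:ℝ) = Real.pi * (2 * n) by ring,
      Real.log_mul Real.pi_pos.ne' (by positivity)]
  rw [eps, hG, h2pi, hf, hM]
  ring

set_option maxHeartbeats 1000000 in
lemma eps_diff_aux (m θ : ℝ) (hm2' : 2 ≤ m) (hθ0 : 0 ≤ θ) (hθ1 : θ ≤ 1) :
    |eps (m + θ) - eps m| ≤ 5 / m := by
  have hm0 : (0:ℝ) < m := by linarith
  set s : ℝ := m + θ with hsdef
  have hms : m ≤ s := by rw [hsdef]; linarith
  have hs0 : (0:ℝ) < s := by linarith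
  set D : ℝ := Real.log s - Real.log m with hD
  -- bounds on D
  have hsm : s / m = 1 + θ / m := by rw [hsdef]; field_simp
  have hDform : D = Real.log (1 + θ / m) := by
    rw [hD, ← Real.log_div hs0.ne' hm0.ne', hsm]
  have hD0 : 0 ≤ D := by
    rw [hDform]; exact Real.log_nonneg (by nlinarith [div_nonneg hθ0 hm0.le])
  have hD1 : D ≤ θ / m := by rw [hDform]; exact log_one_add_le (div_nonneg hθ0 hm0.le)
  have hD2 : θ / m - (θ / m) ^ 2 ≤ D := by
    rw [hDform]; exact le_log_one_add (div_nonneg hθ0 hm0.le)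
  -- bounds on Lm = log(m+1) - log m
  set Lm : ℝ := Real.log (m + 1) - Real.log m with hLm
  have hLmform : Lm = Real.log (1 + 1 / m) := by
    rw [hLm, ← Real.log_div (by linarith) hm0.ne']
    congr 1; field_simp
  have hLm0 : 0 ≤ Lm := by
    rw [hLmform]
    exact Real.log_nonneg (by nlinarith [div_nonneg (zero_le_one (α := ℝ)) hm0.le])
  have hLm1 : Lm ≤ 1 / m := by rw [hLmform]; exact log_one_add_le (by positivity)
  -- bounds on delta
  set δ : ℝ := Real.log (Real.Gamma (s + 1)) - Real.log (Real.Gamma (m + 1)) -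
      θ * Real.log (m + 1) with hδdef
  have hy0 : (0:ℝ) < m + 1 := by linarith
  have hse : (m + 1) + θ = s + 1 := by rw [hsdef]; ring
  have hδup : δ ≤ 0 := by
    have := wendel_upper hy0 hθ0 hθ1
    rw [hse] at this
    rw [hδdef]; linarith
  have hδlo : -(1 / m) ≤ δ := by
    have hw := wendel_lower hy0 hθ0 hθ1
    rw [hse] at hw
    have h1 : Real.log (s + 1) - Real.log (m + 1) = Real.log (1 + θ / (m + 1)) := by
      rw [← Real.log_div (by linarith) hy0.ne']
      congr 1; rw [hsdef]; field_simp; ring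
    have h2 : Real.log (1 + θ / (m + 1)) ≤ θ / (m + 1) :=
      log_one_add_le (div_nonneg hθ0 hy0.le)
    have h3 : θ / (m + 1) ≤ 1 / m := by
      rw [div_le_div_iff₀ (by linarith) hm0]; nlinarith
    have h4 : 0 ≤ Real.log (s + 1) - Real.log (m + 1) := by
      have := Real.log_le_log hy0 (by linarith : m + 1 ≤ s + 1)
      linarith
    have hL' : Real.log (s + 1) - Real.log (m + 1) ≤ 1 / m := by rw [h1]; linarith
    have h5 : (1 - θ) * (Real.log (s + 1) - Real.log (m + 1)) ≤ 1 / m := by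
      calc (1 - θ) * (Real.log (s + 1) - Real.log (m + 1))
          ≤ 1 * (Real.log (s + 1) - Real.log (m + 1)) :=
            mul_le_mul_of_nonneg_right (by linarith) h4
        _ ≤ 1 / m := by linarith
    have h6 : (1 - θ) * (Real.log (s + 1) - Real.log (m + 1))
        = Real.log (s + 1) - Real.log (m + 1) - θ * Real.log (s + 1)
          + θ * Real.log (m + 1) := by ring
    have h7 : (1 - θ) * Real.log (s + 1) = Real.log (s + 1) - θ * Real.log (s + 1) := by ring
    rw [h6] at h5
    rw [h7] at hw
    rw [hδdef]
    clear_value s D Lm δ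
    linarith [hw, h5]
  -- key identity
  have hlogs : Real.log s = Real.log m + D := by rw [hD]; ring
  have hl2s : Real.log (2 * Real.pi * s) = Real.log (2 * Real.pi) + (Real.log m + D) := by
    rw [show 2 * Real.pi * s = (2 * Real.pi) * s by ring,
      Real.log_mul (by positivity) hs0.ne', hlogs]
  have hl2m : Real.log (2 * Real.pi * m) = Real.log (2 * Real.pi) + Real.log m := by
    rw [show 2 * Real.pi * m = (2 * Real.pi) * m by ring,
      Real.log_mul (by positivity) hm0.ne']
  have hkey : eps s - eps m = δ + θ * Lm - (m + θ) * D - D / 2 + θ := by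
    rw [eps, eps, hl2s, hl2m, hlogs, hδdef, hLm]
    rw [hsdef]
    ring
  rw [hkey, abs_le]
  have hDm : D * m ≤ θ := by
    have := mul_le_mul_of_nonneg_right hD1 hm0.le
    calc D * m ≤ θ / m * m := this
    _ = θ := by field_simp
  have hLmm : Lm * m ≤ 1 := by
    have := mul_le_mul_of_nonneg_right hLm1 hm0.le
    calc Lm * m ≤ 1 / m * m := this
    _ = 1 := by field_simp
  have hδm : -1 ≤ δ * m := by
    have := mul_le_mul_of_nonneg_right hδlo hm0.le
    calc (-1 : ℝ) = -(1/m) * m := by field_simp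
    _ ≤ δ * m := this
  have e1 : (δ + θ * Lm - (m + θ) * D - D / 2 + θ) * m
      = δ * m + θ * (Lm * m) - (D * m ^ 2 + θ * (D * m)) - (D * m) / 2 + θ * m := by ring
  have hθθ : θ * θ ≤ 1 := by nlinarith
  have hLmM0 : 0 ≤ Lm * m := mul_nonneg hLm0 hm0.le
  have h2' : θ * (Lm * m) ≤ 1 := by nlinarith [mul_le_mul_of_nonneg_left hLmm hθ0]
  have h1' : 0 ≤ θ * (Lm * m) := mul_nonneg hθ0 hLmM0
  have hDm0 : 0 ≤ D * m := mul_nonneg hD0 hm0.le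
  have h4' : θ * (D * m) ≤ 1 := by nlinarith [mul_le_mul_of_nonneg_left hDm hθ0]
  have h3' : 0 ≤ θ * (D * m) := mul_nonneg hθ0 hDm0
  have h8 : D * m ^ 2 ≤ θ * m := by
    have h := mul_le_mul_of_nonneg_right hDm hm0.le
    calc D * m ^ 2 = D * m * m := by ring
    _ ≤ θ * m := h
  have h9 : δ * m ≤ 0 := mul_nonpos_of_nonpos_of_nonneg hδup hm0.le
  have hDm2 : θ * m - θ ^ 2 ≤ D * m ^ 2 := by
    have h := mul_le_mul_of_nonneg_right hD2 (sq_nonneg m)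
    calc θ * m - θ ^ 2 = (θ / m - (θ / m) ^ 2) * m ^ 2 := by field_simp
    _ ≤ D * m ^ 2 := h
  clear_value s D Lm δ
  constructor
  · rw [show -(5 / m) = (-5) / m by ring, div_le_iff₀ hm0, e1]
    linarith
  · rw [le_div_iff₀ hm0, e1]
    linarith

lemma eps_floor_bound {s : ℝ} (hs : 2 ≤ s) : |eps s - eps (⌊s⌋₊ : ℝ)| ≤ 5 / (⌊s⌋₊ : ℝ) := by
  have hm2 : (2:ℕ) ≤ ⌊s⌋₊ := Nat.le_floor (by exact_mod_cast hs)
  have hm2' : (2:ℝ) ≤ (⌊s⌋₊ : ℝ) := by exact_mod_cast hm2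
  have hms : (⌊s⌋₊ : ℝ) ≤ s := Nat.floor_le (by linarith)
  have hsm1 : s < (⌊s⌋₊ : ℝ) + 1 := Nat.lt_floor_add_one s
  have := eps_diff_aux (⌊s⌋₊ : ℝ) (s - ⌊s⌋₊) hm2' (by linarith) (by linarith)
  rwa [show ((⌊s⌋₊ : ℝ) + (s - ⌊s⌋₊)) = s by ring] at this

lemma eps_tendsto : Tendsto eps atTop (nhds 0) := by
  have h1 : Tendsto (fun s : ℝ => eps (⌊s⌋₊ : ℝ)) atTop (nhds 0) :=
    (eps_nat.comp tendsto_nat_floor_atTop)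
  have h2 : Tendsto (fun s : ℝ => eps s - eps (⌊s⌋₊ : ℝ)) atTop (nhds 0) := by
    apply squeeze_zero_norm' (a := fun s : ℝ => 5 / (⌊s⌋₊ : ℝ))
    · filter_upwards [eventually_ge_atTop (2:ℝ)] with s hs
      simpa [Real.norm_eq_abs] using eps_floor_bound hs
    · have : Tendsto (fun n : ℕ => 5 / (n:ℝ)) atTop (nhds 0) :=
        tendsto_const_div_atTop_nhds_zero_nat 5
      exact this.comp tendsto_nat_floor_atTop
  have := h2.add h1
  rw [add_zero] at this
  exact this.congr (fun s => by ring)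

lemma tendsto_log_one_add_lin (γ : ℝ) :
    Tendsto (fun u : ℝ => Real.log (1 + γ * u) / u) (nhdsWithin 0 (Set.Ioi 0)) (nhds γ) := by
  have hd : HasDerivAt (fun u : ℝ => Real.log (1 + γ * u)) γ 0 := by
    have h1 : HasDerivAt (fun u : ℝ => 1 + γ * u) γ 0 := by
      simpa using ((hasDerivAt_id (0:ℝ)).const_mul γ).const_add 1
    have h2 : HasDerivAt Real.log 1 (1 + γ * 0) := by
      simpa using Real.hasDerivAt_log (by norm_num : (1:ℝ) + γ * 0 ≠ 0)
    have h3 := h2.comp 0 h1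
    rw [one_mul] at h3
    exact h3
  have := hasDerivAt_iff_tendsto_slope.mp hd
  have h3 : Tendsto (slope (fun u : ℝ => Real.log (1 + γ * u)) 0)
      (nhdsWithin 0 (Set.Ioi 0)) (nhds γ) :=
    this.mono_left (nhdsWithin_mono 0 (fun y hy => ne_of_gt hy))
  refine h3.congr (fun u => ?_)
  simp [slope_def_field, div_eq_mul_inv]

lemma tendsto_log_one_add_sq (β : ℝ) :
    Tendsto (fun u : ℝ => Real.log (1 + β * u ^ 2) / u ^ 2) (nhdsWithin 0 (Set.Ioi 0))
      (nhds β) := by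
  have hsq : Tendsto (fun u : ℝ => u ^ 2) (nhdsWithin 0 (Set.Ioi 0))
      (nhdsWithin 0 (Set.Ioi 0)) := by
    apply tendsto_nhdsWithin_of_tendsto_nhds_of_eventually_within
    · have : Tendsto (fun u : ℝ => u ^ 2) (nhds 0) (nhds 0) := by
        simpa using (continuous_pow 2).tendsto (0:ℝ)
      exact this.mono_left nhdsWithin_le_nhds
    · filter_upwards [self_mem_nhdsWithin] with u hu
      exact pow_pos (Set.mem_Ioi.mp hu) 2
  exact (tendsto_log_one_add_lin β).comp hsq

lemma tendsto_Q (x c : ℝ) :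
    Tendsto (fun u : ℝ =>
      ((1 + x * u) * (Real.log (1 + c / 2 * u) - Real.log (1 + x * u)) +
        (1 - x * u) * (Real.log (1 - c / 2 * u) - Real.log (1 - x * u))) / u ^ 2)
      (nhdsWithin 0 (Set.Ioi 0)) (nhds (c * x - c ^ 2 / 4 - x ^ 2)) := by
  have hmain : Tendsto (fun u : ℝ =>
      Real.log (1 + -(c ^ 2 / 4) * u ^ 2) / u ^ 2 - Real.log (1 + -(x ^ 2) * u ^ 2) / u ^ 2 +
        x * (Real.log (1 + c / 2 * u) / u - Real.log (1 + -(c / 2) * u) / u -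
          Real.log (1 + x * u) / u + Real.log (1 + -x * u) / u))
      (nhdsWithin 0 (Set.Ioi 0))
      (nhds (-(c ^ 2 / 4) - -(x ^ 2) + x * (c / 2 - -(c / 2) - x + -x))) := by
    exact ((tendsto_log_one_add_sq (-(c ^ 2 / 4))).sub (tendsto_log_one_add_sq (-(x ^ 2)))).add
      (Filter.Tendsto.const_mul x
        ((((tendsto_log_one_add_lin (c / 2)).sub (tendsto_log_one_add_lin (-(c / 2)))).sub
          (tendsto_log_one_add_lin x)).add (tendsto_log_one_add_lin (-x))))
  have hval : -(c ^ 2 / 4) - -(x ^ 2) + x * (c / 2 - -(c / 2) - x + -x)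
      = c * x - c ^ 2 / 4 - x ^ 2 := by ring
  rw [hval] at hmain
  refine hmain.congr' ?_
  have hmem : Set.Ioo (0:ℝ) (1 / (1 + |x| + |c|)) ∈ nhdsWithin 0 (Set.Ioi 0) :=
    Ioo_mem_nhdsGT_of_mem ⟨le_refl 0, by positivity⟩
  filter_upwards [hmem] with u hu
  obtain ⟨hu0, hu1⟩ := hu
  have hb : (1 + |x| + |c|) * u < 1 := by
    rw [← lt_div_iff₀' (by positivity)]
    exact hu1
  have hxu : |x| * u < 1 := by nlinarith [abs_nonneg x, abs_nonneg c]
  have hcu : |c| * u < 1 := by nlinarith [abs_nonneg x, abs_nonneg c]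
  have hx1 : 0 < 1 + x * u := by nlinarith [neg_abs_le x, le_abs_self x]
  have hx2 : 0 < 1 - x * u := by nlinarith [neg_abs_le x, le_abs_self x]
  have hc1 : 0 < 1 + c / 2 * u := by nlinarith [neg_abs_le c, le_abs_self c]
  have hc2 : 0 < 1 - c / 2 * u := by nlinarith [neg_abs_le c, le_abs_self c]
  have ec : 1 + -(c ^ 2 / 4) * u ^ 2 = (1 + c / 2 * u) * (1 - c / 2 * u) := by ring
  have ex : 1 + -(x ^ 2) * u ^ 2 = (1 + x * u) * (1 - x * u) := by ring
  have ec' : (1 : ℝ) + -(c / 2) * u = 1 - c / 2 * u := by ring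
  have ex' : (1 : ℝ) + -x * u = 1 - x * u := by ring
  rw [ec, ex, ec', ex', Real.log_mul hc1.ne' hc2.ne', Real.log_mul hx1.ne' hx2.ne']
  have hu0' : u ≠ 0 := ne_of_gt hu0
  field_simp
  ring

noncomputable def Lfun (x c : ℝ) (r : ℝ) : ℝ :=
  Real.log r + Real.log Real.pi / 2 + c ^ 2 / 4
    + Real.log (Real.Gamma (2 * r ^ 2 + 1))
    - Real.log (Real.Gamma (r ^ 2 + x * r + 1))
    - Real.log (Real.Gamma (r ^ 2 - x * r + 1))
    + (r ^ 2 + x * r) * Real.log (1 / 2 + c / (4 * r))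
    + (r ^ 2 - x * r) * Real.log (1 / 2 - c / (4 * r))

noncomputable def Gfun (x c : ℝ) (r : ℝ) : ℝ :=
  Real.sqrt (Real.pi * r ^ 2) * Real.exp (c ^ 2 / 4) *
    (Real.Gamma (2 * r ^ 2 + 1) /
      (Real.Gamma (r ^ 2 + x * r + 1) * Real.Gamma (r ^ 2 - x * r + 1))) *
    (1 / 2 + c / (4 * r)) ^ (r ^ 2 + x * r) * (1 / 2 - c / (4 * r)) ^ (r ^ 2 - x * r)

set_option maxHeartbeats 1000000 in
lemma Lfun_eventually (x c : ℝ) : ∀ᶠ r in atTop, Lfun x c r =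
    c ^ 2 / 4 + (eps (2 * r ^ 2) - eps (r ^ 2 + x * r) - eps (r ^ 2 - x * r))
      - Real.log (1 - x ^ 2 / r ^ 2) / 2
      + ((1 + x * (1 / r)) * (Real.log (1 + c / 2 * (1 / r)) - Real.log (1 + x * (1 / r))) +
          (1 - x * (1 / r)) * (Real.log (1 - c / 2 * (1 / r)) - Real.log (1 - x * (1 / r)))) /
          (1 / r) ^ 2 := by
  filter_upwards [eventually_ge_atTop (1 + |x| + |c|)] with r hr
  have hr1 : (1:ℝ) ≤ r := le_trans (by nlinarith [abs_nonneg x, abs_nonneg c]) hr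
  have hr0 : (0:ℝ) < r := by linarith
  have hrx : |x| < r := by nlinarith [abs_nonneg x, abs_nonneg c]
  have hrc : |c| < r := by nlinarith [abs_nonneg x, abs_nonneg c]
  have hrpx : 0 < r + x := by nlinarith [neg_abs_le x]
  have hrmx : 0 < r - x := by nlinarith [le_abs_self x]
  have hrpc : 0 < r + c / 2 := by nlinarith [neg_abs_le c, abs_nonneg c]
  have hrmc : 0 < r - c / 2 := by nlinarith [le_abs_self c, abs_nonneg c]
  have hA1 : 0 < 1 + x * (1 / r) := by
    rw [show 1 + x * (1 / r) = (r + x) / r by field_simp]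
    positivity
  have hA2 : 0 < 1 - x * (1 / r) := by
    rw [show 1 - x * (1 / r) = (r - x) / r by field_simp]
    positivity
  have hB1 : 0 < 1 + c / 2 * (1 / r) := by
    rw [show 1 + c / 2 * (1 / r) = (r + c / 2) / r by field_simp]
    positivity
  have hB2 : 0 < 1 - c / 2 * (1 / r) := by
    rw [show 1 - c / 2 * (1 / r) = (r - c / 2) / r by field_simp]
    positivity
  have ha : 0 < r ^ 2 + x * r := by nlinarith
  have hb : 0 < r ^ 2 - x * r := by nlinarith
  have hlogsq : Real.log (r ^ 2) = 2 * Real.log r := by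
    rw [Real.log_pow]; norm_num
  have l1 : Real.log (2 * r ^ 2) = Real.log 2 + 2 * Real.log r := by
    rw [Real.log_mul two_ne_zero (by positivity), hlogsq]
  have l2 : Real.log (2 * Real.pi * (2 * r ^ 2))
      = Real.log 2 + Real.log Real.pi + (Real.log 2 + 2 * Real.log r) := by
    rw [show 2 * Real.pi * (2 * r ^ 2) = 2 * (Real.pi * (2 * r ^ 2)) by ring,
      Real.log_mul two_ne_zero (by positivity),
      Real.log_mul Real.pi_ne_zero (by positivity), l1]
    ring
  have l3 : Real.log (r ^ 2 + x * r) = 2 * Real.log r + Real.log (1 + x * (1 / r)) := by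
    rw [show r ^ 2 + x * r = r ^ 2 * (1 + x * (1 / r)) by field_simp,
      Real.log_mul (by positivity) hA1.ne', hlogsq]
  have l4 : Real.log (r ^ 2 - x * r) = 2 * Real.log r + Real.log (1 - x * (1 / r)) := by
    rw [show r ^ 2 - x * r = r ^ 2 * (1 - x * (1 / r)) by field_simp,
      Real.log_mul (by positivity) hA2.ne', hlogsq]
  have l5 : Real.log (2 * Real.pi * (r ^ 2 + x * r))
      = Real.log 2 + Real.log Real.pi + (2 * Real.log r + Real.log (1 + x * (1 / r))) := by
    rw [show 2 * Real.pi * (r ^ 2 + x * r) = 2 * (Real.pi * (r ^ 2 + x * r)) by ring,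
      Real.log_mul two_ne_zero (by positivity),
      Real.log_mul Real.pi_ne_zero (by positivity), l3]
    ring
  have l6 : Real.log (2 * Real.pi * (r ^ 2 - x * r))
      = Real.log 2 + Real.pi.log + (2 * Real.log r + Real.log (1 - x * (1 / r))) := by
    rw [show 2 * Real.pi * (r ^ 2 - x * r) = 2 * (Real.pi * (r ^ 2 - x * r)) by ring,
      Real.log_mul two_ne_zero (by positivity),
      Real.log_mul Real.pi_ne_zero (by positivity), l4]
    ring
  have l7 : Real.log (1 / 2 + c / (4 * r)) = Real.log (1 + c / 2 * (1 / r)) - Real.log 2 := by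
    rw [show 1 / 2 + c / (4 * r) = (1 + c / 2 * (1 / r)) / 2 by field_simp; ring,
      Real.log_div hB1.ne' two_ne_zero]
  have l8 : Real.log (1 / 2 - c / (4 * r)) = Real.log (1 - c / 2 * (1 / r)) - Real.log 2 := by
    rw [show 1 / 2 - c / (4 * r) = (1 - c / 2 * (1 / r)) / 2 by field_simp; ring,
      Real.log_div hB2.ne' two_ne_zero]
  have l9 : Real.log (1 - x ^ 2 / r ^ 2)
      = Real.log (1 + x * (1 / r)) + Real.log (1 - x * (1 / r)) := by
    rw [show 1 - x ^ 2 / r ^ 2 = (1 + x * (1 / r)) * (1 - x * (1 / r)) by field_simp; ring,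
      Real.log_mul hA1.ne' hA2.ne']
  simp only [Lfun, eps]
  rw [l1, l2, l3, l4, l5, l6, l7, l8, l9]
  have hrne : r ≠ 0 := hr0.ne'
  field_simp
  ring

lemma Lfun_tendsto (x c : ℝ) : Tendsto (Lfun x c) atTop (nhds (-x ^ 2 + c * x)) := by
  have hts2 : Tendsto (fun r : ℝ => 2 * r ^ 2) atTop atTop :=
    (tendsto_pow_atTop two_ne_zero).const_mul_atTop two_pos
  have hta : Tendsto (fun r : ℝ => r ^ 2 + x * r) atTop atTop := by
    refine tendsto_atTop_mono' atTop ?_ tendsto_id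
    filter_upwards [eventually_ge_atTop (1 + |x|)] with r hr
    have h0 : 0 ≤ r := le_trans (by positivity) hr
    simp only [id_eq]
    nlinarith [neg_abs_le x, abs_nonneg x]
  have htb : Tendsto (fun r : ℝ => r ^ 2 - x * r) atTop atTop := by
    refine tendsto_atTop_mono' atTop ?_ tendsto_id
    filter_upwards [eventually_ge_atTop (1 + |x|)] with r hr
    have h0 : 0 ≤ r := le_trans (by positivity) hr
    simp only [id_eq]
    nlinarith [le_abs_self x, abs_nonneg x]
  have heps : Tendsto (fun r : ℝ =>
      eps (2 * r ^ 2) - eps (r ^ 2 + x * r) - eps (r ^ 2 - x * r)) atTop (nhds 0) := by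
    have := ((eps_tendsto.comp hts2).sub (eps_tendsto.comp hta)).sub (eps_tendsto.comp htb)
    simpa using this
  have hlog0 : Tendsto (fun r : ℝ => Real.log (1 - x ^ 2 / r ^ 2) / 2) atTop (nhds 0) := by
    have h1 : Tendsto (fun r : ℝ => x ^ 2 / r ^ 2) atTop (nhds 0) :=
      tendsto_const_nhds.div_atTop (tendsto_pow_atTop two_ne_zero)
    have h2 : Tendsto (fun r : ℝ => 1 - x ^ 2 / r ^ 2) atTop (nhds 1) := by
      simpa using tendsto_const_nhds.sub h1
    have h3 := (h2.log one_ne_zero).div_const 2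
    simpa using h3
  have hinr : Tendsto (fun r : ℝ => 1 / r) atTop (nhdsWithin 0 (Set.Ioi 0)) := by
    apply tendsto_nhdsWithin_of_tendsto_nhds_of_eventually_within
    · simpa [one_div] using tendsto_inv_atTop_zero
    · filter_upwards [eventually_gt_atTop (0:ℝ)] with r hr
      simp only [Set.mem_Ioi]
      positivity
  have hQ : Tendsto (fun r : ℝ =>
      ((1 + x * (1 / r)) * (Real.log (1 + c / 2 * (1 / r)) - Real.log (1 + x * (1 / r))) +
        (1 - x * (1 / r)) * (Real.log (1 - c / 2 * (1 / r)) - Real.log (1 - x * (1 / r)))) /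
        (1 / r) ^ 2) atTop (nhds (c * x - c ^ 2 / 4 - x ^ 2)) := by
    exact (tendsto_Q x c).comp hinr
  have htotal := ((tendsto_const_nhds (x := c ^ 2 / 4)).add heps).sub hlog0 |>.add hQ
  have h := htotal.congr' (Filter.EventuallyEq.symm (Lfun_eventually x c))
  have hv : c ^ 2 / 4 + 0 - 0 + (c * x - c ^ 2 / 4 - x ^ 2) = -x ^ 2 + c * x := by ring
  rwa [hv] at h

lemma Gfun_eq {x c r : ℝ} (hr : 1 + |x| + |c| ≤ r) : Gfun x c r = Real.exp (Lfun x c r) := by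
  have hr1 : (1:ℝ) ≤ r := le_trans (by nlinarith [abs_nonneg x, abs_nonneg c]) hr
  have hr0 : (0:ℝ) < r := by linarith
  have hrx : |x| < r := by nlinarith [abs_nonneg x, abs_nonneg c]
  have hrc : |c| < r := by nlinarith [abs_nonneg x, abs_nonneg c]
  have ha : 0 < r ^ 2 + x * r := by nlinarith [neg_abs_le x]
  have hb : 0 < r ^ 2 - x * r := by nlinarith [le_abs_self x]
  have hp : 0 < 1 / 2 + c / (4 * r) := by
    rw [show 1 / 2 + c / (4 * r) = (2 * r + c) / (4 * r) by field_simp; ring]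
    apply div_pos (by nlinarith [neg_abs_le c]) (by positivity)
  have hq : 0 < 1 / 2 - c / (4 * r) := by
    rw [show 1 / 2 - c / (4 * r) = (2 * r - c) / (4 * r) by field_simp; ring]
    apply div_pos (by nlinarith [le_abs_self c]) (by positivity)
  have hΓN : 0 < Real.Gamma (2 * r ^ 2 + 1) := Real.Gamma_pos_of_pos (by positivity)
  have hΓa : 0 < Real.Gamma (r ^ 2 + x * r + 1) := Real.Gamma_pos_of_pos (by linarith)
  have hΓb : 0 < Real.Gamma (r ^ 2 - x * r + 1) := Real.Gamma_pos_of_pos (by linarith)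
  have hsqrt : Real.sqrt (Real.pi * r ^ 2)
      = Real.exp (Real.log Real.pi / 2 + Real.log r) := by
    rw [show Real.pi * r ^ 2 = (Real.pi * r ^ 2) by rfl]
    rw [Real.sqrt_mul Real.pi_pos.le, Real.sqrt_sq hr0.le, Real.exp_add, Real.exp_log hr0,
      Real.sqrt_eq_rpow, Real.rpow_def_of_pos Real.pi_pos]
    ring_nf
  have hGam : Real.Gamma (2 * r ^ 2 + 1) /
      (Real.Gamma (r ^ 2 + x * r + 1) * Real.Gamma (r ^ 2 - x * r + 1))
      = Real.exp (Real.log (Real.Gamma (2 * r ^ 2 + 1)) -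
          (Real.log (Real.Gamma (r ^ 2 + x * r + 1)) +
            Real.log (Real.Gamma (r ^ 2 - x * r + 1)))) := by
    rw [Real.exp_sub, Real.exp_add, Real.exp_log hΓN, Real.exp_log hΓa, Real.exp_log hΓb]
  have hpe : (1 / 2 + c / (4 * r)) ^ (r ^ 2 + x * r)
      = Real.exp (Real.log (1 / 2 + c / (4 * r)) * (r ^ 2 + x * r)) :=
    Real.rpow_def_of_pos hp _
  have hqe : (1 / 2 - c / (4 * r)) ^ (r ^ 2 - x * r)
      = Real.exp (Real.log (1 / 2 - c / (4 * r)) * (r ^ 2 - x * r)) :=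
    Real.rpow_def_of_pos hq _
  rw [Gfun, hsqrt, hGam, hpe, hqe, ← Real.exp_add, ← Real.exp_add, ← Real.exp_add, ← Real.exp_add]
  rw [Lfun]
  congr 1
  ring

lemma Gfun_tendsto (x c : ℝ) :
    Tendsto (Gfun x c) atTop (nhds (Real.exp (-x ^ 2 + c * x))) := by
  have := (Real.continuous_exp.tendsto _).comp (Lfun_tendsto x c)
  refine this.congr' ?_
  filter_upwards [eventually_ge_atTop (1 + |x| + |c|)] with r hr
  exact (Gfun_eq hr).symm

/-- The Kravchuk weight under the Hermite scaling converges to the Hermite weight. -/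
theorem kravchuk_to_hermite_weight (x c : ℝ) :
    Tendsto (fun N : ℝ =>
        Real.sqrt (Real.pi * N / 2) * Real.exp (c ^ 2 / 4) *
          (Real.Gamma (N + 1) /
            (Real.Gamma (N / 2 + x * Real.sqrt (N / 2) + 1) *
              Real.Gamma (N / 2 - x * Real.sqrt (N / 2) + 1))) *
          (1 / 2 + c / (2 * Real.sqrt (2 * N))) ^ (N / 2 + x * Real.sqrt (N / 2)) *
          (1 / 2 - c / (2 * Real.sqrt (2 * N))) ^ (N / 2 - x * Real.sqrt (N / 2)))
      atTop (nhds (Real.exp (-x ^ 2 + c * x))) := by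
  have hs : Tendsto (fun N : ℝ => Real.sqrt (N / 2)) atTop atTop := by
    have h1 : Tendsto Real.sqrt atTop atTop :=
      (tendsto_rpow_atTop (by norm_num : (0:ℝ) < 1/2)).congr fun y => (Real.sqrt_eq_rpow y).symm
    exact h1.comp (tendsto_id.atTop_div_const two_pos)
  have hcomp := (Gfun_tendsto x c).comp hs
  refine hcomp.congr' ?_
  filter_upwards [eventually_gt_atTop (0:ℝ)] with N hN
  set r : ℝ := Real.sqrt (N / 2) with hrdef
  have hr2 : r ^ 2 = N / 2 := Real.sq_sqrt (by positivity)
  have hsq2N : Real.sqrt (2 * N) = 2 * r := by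
    rw [hrdef, show (2:ℝ) * N = 2 ^ 2 * (N / 2) by ring,
      Real.sqrt_mul (by positivity) (N / 2), Real.sqrt_sq (by norm_num : (0:ℝ) ≤ 2)]
  show Gfun x c r = _
  rw [Gfun, hr2, hsq2N, show Real.pi * (N / 2) = Real.pi * N / 2 by ring,
    show (2:ℝ) * (N / 2) = N by ring, show (2:ℝ) * (2 * r) = 4 * r by ring]
end
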